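/- arXiv:2412.06223 — 5 statements merged into one kernel-verified Lean document; each statement's English description precedes it below -/
import Mathlib

section
/- Let t ≥ 1 and w be integers with w ≥ t² + 2t + 2 (so w ≥ 5), and let n ≥ w + t − 1. Then every (n, t, w, w−2)-LPECC code of size b satisfies b ≤ ⌊binom(n+1, 2) / binom(w+t, 2)⌋. -/
open Finset

/-- Set-theoretic representation of an `(n,t,w,e)`-LPECC code of size `b`:
a ground set `X` with `|X| = n` together with pairwise disjoint families
`P i` of subsets (blocks) of `X` satisfying Properties A(t), B(w), C(e). -/
def IsLPECC {α : Type*} [DecidableEq α] (n t w e : ℕ) (X : Finset α)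
    {b : ℕ} (P : Fin b → Finset (Finset α)) : Prop :=
  X.card = n ∧
  (∀ i, ∀ B ∈ P i, B ⊆ X) ∧
  (∀ i j : Fin b, i ≠ j → Disjoint (P i) (P j)) ∧
  (∀ T ⊆ X, T.card = t → ∀ i, ∃ B ∈ P i, Disjoint B T) ∧
  (∀ i, ∀ B ∈ P i, B.card ≤ w) ∧
  (∀ i j : Fin b, i ≠ j → ∀ B ∈ P i, ∀ B' ∈ P j, 2 * e + 1 ≤ (symmDiff B B').card)

private lemma two_mul_choose_two (n : ℕ) : 2 * n.choose 2 = n * (n - 1) := by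
  rw [Nat.choose_two_right, Nat.mul_div_cancel']
  rcases n with _ | m
  · simp
  · simpa [Nat.succ_sub_one, mul_comm] using (Nat.even_mul_succ_self m).two_dvd

private lemma choose_two_succ (n : ℕ) : (n + 1).choose 2 = n.choose 2 + n := by
  rw [Nat.choose_succ_succ n 1, Nat.choose_one_right]
  show n + n.choose 2 = n.choose 2 + n
  omega

/-- covered pairs of a family of finsets -/
private def pcov {γ : Type*} [DecidableEq γ] (F : Finset (Finset γ)) : Finset (Finset γ) :=
  F.biUnion fun B => B.powersetCard 2

private lemma mem_pcov {γ : Type*} [DecidableEq γ] {F : Finset (Finset γ)} {p : Finset γ} :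
    p ∈ pcov F ↔ ∃ B ∈ F, p ⊆ B ∧ p.card = 2 := by
  simp [pcov, mem_powersetCard]

private lemma pcov_mono {γ : Type*} [DecidableEq γ] {F G : Finset (Finset γ)} (h : F ⊆ G) :
    pcov F ⊆ pcov G :=
  biUnion_subset_biUnion_of_subset_left _ h

/-- star bound: if the punctured neighbourhood of `x` has at least `q` elements and the
subfamily of blocks avoiding `x` covers at least `q'` pairs, then `F` covers `q' + q` pairs. -/
private lemma star_bound {γ : Type*} [DecidableEq γ] (F : Finset (Finset γ)) (x : γ)
    {q q' : ℕ}
    (hq : q ≤ (((F.filter fun B => x ∈ B).biUnion id).erase x).card)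
    (hrec : q' ≤ (pcov (F.filter fun B => x ∉ B)).card) :
    q' + q ≤ (pcov F).card := by
  set Nx := ((F.filter fun B => x ∈ B).biUnion id).erase x with hNx
  set star := Nx.image (fun y => ({x, y} : Finset γ)) with hstar
  have hstarcard : star.card = Nx.card := by
    apply card_image_of_injOn
    intro y hy y' hy' hxy
    have hyx : y ≠ x := ne_of_mem_erase hy
    have hy'x : y' ≠ x := ne_of_mem_erase hy'
    have : y ∈ ({x, y'} : Finset γ) := by
      simp only at hxy
      rw [← hxy]; simp
    simp only [mem_insert, mem_singleton] at this
    tauto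
  have hstarsub : star ⊆ pcov F := by
    intro p hp
    simp only [hstar, mem_image] at hp
    obtain ⟨y, hy, rfl⟩ := hp
    have hyx : y ≠ x := ne_of_mem_erase hy
    have hy' := mem_of_mem_erase hy
    simp only [mem_biUnion, mem_filter, id] at hy'
    obtain ⟨B, ⟨hBF, hxB⟩, hyB⟩ := hy'
    rw [mem_pcov]
    refine ⟨B, hBF, ?_, ?_⟩
    · intro z hz
      simp only [mem_insert, mem_singleton] at hz
      rcases hz with rfl | rfl <;> assumption
    · rw [card_insert_of_notMem (by simp [Ne.symm hyx]), card_singleton]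
  have hdisj : Disjoint (pcov (F.filter fun B => x ∉ B)) star := by
    rw [disjoint_left]
    intro p hp hps
    rw [mem_pcov] at hp
    obtain ⟨B, hB, hpB, -⟩ := hp
    simp only [mem_filter] at hB
    simp only [hstar, mem_image] at hps
    obtain ⟨y, hy, rfl⟩ := hps
    exact hB.2 (hpB (by simp))
  have hsub : pcov (F.filter fun B => x ∉ B) ∪ star ⊆ pcov F :=
    union_subset (pcov_mono (filter_subset _ _)) hstarsub
  calc q' + q ≤ (pcov (F.filter fun B => x ∉ B)).card + star.card := by omega
    _ = ((pcov (F.filter fun B => x ∉ B)) ∪ star).card := (card_union_of_disjoint hdisj).symm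
    _ ≤ (pcov F).card := card_le_card hsub

-- new material
private lemma exists_ne_of_two_le_card {γ : Type*} [DecidableEq γ] {s : Finset γ} (o : γ)
    (h : 2 ≤ s.card) : ∃ x ∈ s, x ≠ o := by
  by_contra hc
  push_neg at hc
  have : s.card ≤ 1 := card_le_one.2 (fun a ha b hb => by rw [hc a ha, hc b hb])
  omega

private lemma arith_K (w a b : ℕ) (h : a + b + 3 ≤ w) :
    (w + (a + b + 1)).choose 2 ≤ (w + a).choose 2 + (w + b).choose 2 := by
  have e1 := two_mul_choose_two (w + (a + b + 1))
  have e2 := two_mul_choose_two (w + a)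
  have e3 := two_mul_choose_two (w + b)
  have r1 : w + (a + b + 1) - 1 = w + a + b := by omega
  have r2 : w + a - 1 = w - 1 + a := by omega
  have r3 : w + b - 1 = w - 1 + b := by omega
  rw [r1] at e1; rw [r2] at e2; rw [r3] at e3
  have key : (w + (a + b + 1)) * (w + a + b) ≤ (w + a) * (w - 1 + a) + (w + b) * (w - 1 + b) := by
    obtain ⟨c, rfl⟩ : ∃ c, w = a + b + 3 + c := ⟨w - (a + b + 3), by omega⟩
    have : a + b + 3 + c - 1 = a + b + 2 + c := by omega
    rw [this]
    nlinarith [Nat.zero_le (a*b), Nat.zero_le c]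
  omega

/-- Sub-lemma: a "clique" family of `w`-sets (any two share a non-`o` point) with no
transversal of size `k` avoiding `o` covers at least `C(w+k,2)` pairs. -/
private lemma sub_S {γ : Type*} [DecidableEq γ] (o : γ) (w : ℕ) :
    ∀ k : ℕ, ∀ C : Finset (Finset γ), k + 2 ≤ w →
    (∀ B ∈ C, B.card = w) →
    (∀ B ∈ C, ∀ B' ∈ C, B ≠ B' → ∃ x, x ∈ B ∩ B' ∧ x ≠ o) →
    (∀ S : Finset γ, o ∉ S → S.card ≤ k → ∃ B ∈ C, Disjoint B S) →
    (w + k).choose 2 ≤ (pcov C).card := by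
  intro k
  induction k with
  | zero =>
    intro C hkw hcard hclique hτ
    obtain ⟨B, hB, -⟩ := hτ ∅ (by simp) (by simp)
    calc (w + 0).choose 2 = (B.powersetCard 2).card := by
          rw [card_powersetCard, hcard B hB, Nat.add_zero]
      _ ≤ (pcov C).card := card_le_card (by
          intro p hp; rw [mem_pcov]; rw [mem_powersetCard] at hp
          exact ⟨B, hB, hp.1, hp.2⟩)
  | succ k IH =>
    intro C hkw hcard hclique hτ
    by_cases hx : ∃ x, x ≠ o ∧ w + k ≤ (((C.filter fun B => x ∈ B).biUnion id).erase x).card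
    · obtain ⟨x, hxo, hxN⟩ := hx
      have hrec : (w + k).choose 2 ≤ (pcov (C.filter fun B => x ∉ B)).card := by
        apply IH (C.filter fun B => x ∉ B) (by omega)
        · intro B hB; exact hcard B (mem_of_mem_filter _ hB)
        · intro B hB B' hB' hne
          exact hclique B (mem_of_mem_filter _ hB) B' (mem_of_mem_filter _ hB') hne
        · intro S hoS hScard
          obtain ⟨B, hB, hdisj⟩ := hτ (insert x S)
            (by simp [Ne.symm hxo, hoS])
            (le_trans (card_insert_le _ _) (by omega))
          rw [disjoint_insert_right] at hdisj
          exact ⟨B, mem_filter.2 ⟨hB, hdisj.1⟩, hdisj.2⟩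
      have hsb := star_bound C x hxN hrec
      calc (w + (k + 1)).choose 2 = (w + k).choose 2 + (w + k) := by
            rw [show w + (k + 1) = (w + k) + 1 by omega, choose_two_succ]
        _ ≤ (pcov C).card := hsb
    · exfalso
      push_neg at hx
      obtain ⟨B₁, hB₁, -⟩ := hτ ∅ (by simp) (by simp)
      have hB₁o : k + 1 ≤ (B₁.erase o).card := by
        have h1 : B₁.card - 1 ≤ (B₁.erase o).card := Finset.pred_card_le_card_erase
        have := hcard B₁ hB₁
        omega
      obtain ⟨T, hTsub, hTcard⟩ := exists_subset_card_eq hB₁o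
      have hoT : o ∉ T := fun h => (mem_erase.1 (hTsub h)).1 rfl
      obtain ⟨B, hB, hBdisj⟩ := hτ T hoT (by omega)
      have hTB₁ : T ⊆ B₁ := hTsub.trans (erase_subset _ _)
      by_cases hBB₁ : B = B₁
      · subst hBB₁
        have : T = ∅ := by
          rw [← subset_empty]
          intro y hy
          exact absurd (hTB₁ hy) (disjoint_right.1 hBdisj hy)
        rw [this] at hTcard; simp at hTcard
      · obtain ⟨x, hxBB₁, hxo⟩ := hclique B hB B₁ hB₁ hBB₁
        rw [mem_inter] at hxBB₁
        have hxlt := hx x hxo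
        -- build a large subset of the punctured neighbourhood of x
        have hBT : Disjoint B T := hBdisj
        have hcup : ((B ∪ T).erase x) ⊆ ((C.filter fun B' => x ∈ B').biUnion id).erase x := by
          intro y hy
          rw [mem_erase] at hy ⊢
          refine ⟨hy.1, ?_⟩
          rw [mem_biUnion]
          rcases mem_union.1 hy.2 with h | h
          · exact ⟨B, mem_filter.2 ⟨hB, hxBB₁.1⟩, h⟩
          · exact ⟨B₁, mem_filter.2 ⟨hB₁, hxBB₁.2⟩, hTB₁ h⟩
        have hcard2 : (B ∪ T).card = w + (k + 1) := by
          rw [card_union_of_disjoint hBT, hcard B hB, hTcard]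
        have hxBU : x ∈ B ∪ T := mem_union_left _ hxBB₁.1
        have : w + k ≤ ((B ∪ T).erase x).card := by
          rw [card_erase_of_mem hxBU, hcard2]; omega
        have := le_trans this (card_le_card hcup)
        omega

/-- Cluster-peeling lemma. -/
private lemma lem_K {γ : Type*} [DecidableEq γ] (o : γ) (w t : ℕ)
    (hwt : 2 * t + 2 ≤ w) :
    ∀ k, k ≤ t → ∀ F : Finset (Finset γ),
    (∀ B ∈ F, B.card = w) →
    (∀ B ∈ F, ∀ B' ∈ F, B ≠ B' → (∃ x, x ∈ B ∩ B' ∧ x ≠ o) → w + 1 ≤ (B ∩ B').card + t) →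
    (∀ S : Finset γ, o ∉ S → S.card ≤ k → ∃ B ∈ F, Disjoint B S) →
    (w + k).choose 2 ≤ (pcov F).card := by
  intro k
  induction k using Nat.strong_induction_on with
  | _ k IH =>
  intro hk F hcard hclust hτ
  obtain ⟨B₁, hB₁, -⟩ := hτ ∅ (by simp) (by simp)
  set C₁ := F.filter (fun B => B = B₁ ∨ ∃ x, x ∈ B ∩ B₁ ∧ x ≠ o) with hC₁def
  have hC₁sub : C₁ ⊆ F := filter_subset _ _
  have hB₁C : B₁ ∈ C₁ := mem_filter.2 ⟨hB₁, Or.inl rfl⟩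
  have hbig : ∀ B ∈ C₁, B ≠ B₁ → w + 1 ≤ (B ∩ B₁).card + t := by
    intro B hB hne
    have hm := mem_filter.1 hB
    rcases hm.2 with h | h
    · exact absurd h hne
    · exact hclust B hm.1 B₁ hB₁ hne h
  -- two blocks with large intersections with B₁ share a non-o point
  have hmeet : ∀ B B' : Finset γ, B.card = w → B'.card = w →
      w + 1 ≤ (B ∩ B₁).card + t → w + 1 ≤ (B' ∩ B₁).card + t →
      ∃ x, x ∈ B ∩ B' ∧ x ≠ o := by
    intro B B' hBw hB'w h1 h2
    have hsub : (B ∩ B₁) ∪ (B' ∩ B₁) ⊆ B₁ :=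
      union_subset (inter_subset_right) (inter_subset_right)
    have hle : ((B ∩ B₁) ∪ (B' ∩ B₁)).card ≤ w := by
      rw [← hcard B₁ hB₁]; exact card_le_card hsub
    have hie := card_inter_add_card_union (B ∩ B₁) (B' ∩ B₁)
    have hincl : (B ∩ B₁) ∩ (B' ∩ B₁) ⊆ B ∩ B' := by
      intro y hy
      simp only [mem_inter] at hy ⊢
      exact ⟨hy.1.1, hy.2.1⟩
    have h3 : 2 ≤ ((B ∩ B₁) ∩ (B' ∩ B₁)).card := by omega
    have h4 : 2 ≤ (B ∩ B').card := le_trans h3 (card_le_card hincl)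
    obtain ⟨x, hx, hxo⟩ := exists_ne_of_two_le_card o h4
    exact ⟨x, hx, hxo⟩
  have hclique : ∀ B ∈ C₁, ∀ B' ∈ C₁, B ≠ B' → ∃ x, x ∈ B ∩ B' ∧ x ≠ o := by
    intro B hB B' hB' hne
    by_cases h1 : B = B₁
    · subst h1
      rcases (mem_filter.1 hB').2 with h | ⟨x, hx, hxo⟩
      · exact absurd h (fun h => hne h.symm)
      · exact ⟨x, by rw [inter_comm]; exact (mem_inter.1 hx) |> fun h => mem_inter.2 ⟨h.1, h.2⟩, hxo⟩
    · by_cases h2 : B' = B₁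
      · subst h2
        rcases (mem_filter.1 hB).2 with h | ⟨x, hx, hxo⟩
        · exact absurd h h1
        · exact ⟨x, hx, hxo⟩
      · exact hmeet B B' (hcard B (hC₁sub hB)) (hcard B' (hC₁sub hB'))
          (hbig B hB h1) (hbig B' hB' h2)
  have hclosure : ∀ B'' ∈ F, B'' ∉ C₁ → ∀ B ∈ C₁, ∀ x, x ∈ B'' ∩ B → x = o := by
    intro B'' hB'' hB''n B hB x hx
    by_contra hxo
    have hBB'' : B'' ≠ B := fun h => hB''n (h ▸ hB)
    by_cases h1 : B = B₁
    · subst h1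
      exact hB''n (mem_filter.2 ⟨hB'', Or.inr ⟨x, hx, hxo⟩⟩)
    · have hs := hclust B'' hB'' B (hC₁sub hB) hBB'' ⟨x, hx, hxo⟩
      -- B'' ∩ B large, B ∩ B₁ large ⇒ B'' ∩ B₁ has ≥ 2 elements
      have hb := hbig B hB h1
      have hsub : (B'' ∩ B) ∪ (B₁ ∩ B) ⊆ B :=
        union_subset (inter_subset_right) (inter_subset_right)
      have hle : ((B'' ∩ B) ∪ (B₁ ∩ B)).card ≤ w := by
        rw [← hcard B (hC₁sub hB)]; exact card_le_card hsub
      have hie := card_inter_add_card_union (B'' ∩ B) (B₁ ∩ B)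
      have hincl : (B'' ∩ B) ∩ (B₁ ∩ B) ⊆ B'' ∩ B₁ := by
        intro y hy
        simp only [mem_inter] at hy ⊢
        exact ⟨hy.1.1, hy.2.1⟩
      have hBB₁ : (B ∩ B₁).card = (B₁ ∩ B).card := by rw [inter_comm]
      have h3 : 2 ≤ ((B'' ∩ B) ∩ (B₁ ∩ B)).card := by omega
      have h4 : 2 ≤ (B'' ∩ B₁).card := le_trans h3 (card_le_card hincl)
      obtain ⟨y, hy, hyo⟩ := exists_ne_of_two_le_card o h4
      exact hB''n (mem_filter.2 ⟨hB'', Or.inr ⟨y, hy, hyo⟩⟩)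
  by_cases hT : ∃ T : Finset γ, o ∉ T ∧ T.card ≤ k ∧ ∀ B ∈ C₁, ¬ Disjoint B T
  · -- minimal transversal of C₁
    classical
    have hPex : ∃ j, ∃ T : Finset γ, o ∉ T ∧ T.card ≤ j ∧ ∀ B ∈ C₁, ¬ Disjoint B T := ⟨k, hT⟩
    set τ := Nat.find hPex with hτdef
    obtain ⟨T₁, hoT₁, hT₁card, hT₁hits⟩ := Nat.find_spec hPex
    have hτk : τ ≤ k := Nat.find_le hT
    have hτ1 : 1 ≤ τ := by
      rcases Nat.eq_zero_or_pos τ with h | h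
      · exfalso
        have := Nat.find_spec hPex
        rw [← hτdef, h] at this
        obtain ⟨T, hoT, hTc, hhits⟩ := this
        have : T = ∅ := card_eq_zero.1 (le_antisymm hTc (Nat.zero_le _))
        subst this
        exact hhits B₁ hB₁C (by simp)
      · exact h
    -- C₁ has no (τ-1)-transversal
    have hτsub : ∀ S : Finset γ, o ∉ S → S.card ≤ τ - 1 → ∃ B ∈ C₁, Disjoint B S := by
      intro S hoS hScard
      by_contra hc
      push_neg at hc
      have hP : ∃ T : Finset γ, o ∉ T ∧ T.card ≤ τ - 1 ∧ ∀ B ∈ C₁, ¬ Disjoint B T :=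
        ⟨S, hoS, hScard, hc⟩
      exact Nat.find_min hPex (show τ - 1 < τ by omega) hP
    have q1 : (w + (τ - 1)).choose 2 ≤ (pcov C₁).card := by
      apply sub_S o w (τ - 1) C₁ (by omega)
      · intro B hB; exact hcard B (hC₁sub hB)
      · exact hclique
      · exact hτsub
    -- the rest of the family
    set F' := F \ C₁ with hF'def
    have hτ' : ∀ S : Finset γ, o ∉ S → S.card ≤ k - τ → ∃ B ∈ F', Disjoint B S := by
      intro S hoS hScard
      obtain ⟨B, hB, hdisj⟩ := hτ (S ∪ T₁) (by simp [hoS, hoT₁])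
        (le_trans (card_union_le _ _) (by omega))
      rw [disjoint_union_right] at hdisj
      refine ⟨B, ?_, hdisj.1⟩
      rw [hF'def, mem_sdiff]
      refine ⟨hB, fun hBC => ?_⟩
      exact hT₁hits B hBC hdisj.2
    have q2 : (w + (k - τ)).choose 2 ≤ (pcov F').card := by
      apply IH (k - τ) (by omega) (by omega) F'
      · intro B hB; exact hcard B (mem_sdiff.1 hB).1
      · intro B hB B' hB' hne hsh
        exact hclust B (mem_sdiff.1 hB).1 B' (mem_sdiff.1 hB').1 hne hsh
      · exact hτ'
    have hdisjp : Disjoint (pcov C₁) (pcov F') := by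
      rw [disjoint_left]
      intro p hp hp'
      rw [mem_pcov] at hp hp'
      obtain ⟨B, hB, hpB, hpc⟩ := hp
      obtain ⟨B'', hB'', hpB'', -⟩ := hp'
      obtain ⟨x, hx, hxo⟩ := exists_ne_of_two_le_card o (le_of_eq hpc.symm)
      have hBm := mem_sdiff.1 hB''
      exact hxo (hclosure B'' hBm.1 hBm.2 B hB x (mem_inter.2 ⟨hpB'' hx, hpB hx⟩))
    have hsum : (pcov C₁).card + (pcov F').card ≤ (pcov F).card := by
      rw [← card_union_of_disjoint hdisjp]
      apply card_le_card
      exact union_subset (pcov_mono hC₁sub) (pcov_mono sdiff_subset)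
    have harith : (w + k).choose 2 ≤ (w + (τ - 1)).choose 2 + (w + (k - τ)).choose 2 := by
      have := arith_K w (τ - 1) (k - τ) (by omega)
      have hk' : (τ - 1) + (k - τ) + 1 = k := by omega
      rw [hk'] at this
      exact this
    omega
  · push_neg at hT
    have hτC : ∀ S : Finset γ, o ∉ S → S.card ≤ k → ∃ B ∈ C₁, Disjoint B S := by
      intro S hoS hScard
      obtain ⟨B, hB, hd⟩ := hT S hoS hScard
      exact ⟨B, hB, hd⟩
    have := sub_S o w k C₁ (by omega) (fun B hB => hcard B (hC₁sub hB)) hclique hτC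
    exact le_trans this (card_le_card (pcov_mono hC₁sub))

/-- Main covering lemma: a family of `w`-sets with no `t`-transversal avoiding `o`
covers at least `C(w+t,2)` pairs. -/
private lemma lem_L {γ : Type*} [DecidableEq γ] (o : γ) (w : ℕ) :
    ∀ t : ℕ, t ^ 2 + 2 * t + 2 ≤ w → ∀ F : Finset (Finset γ),
    (∀ B ∈ F, B.card = w) →
    (∀ S : Finset γ, o ∉ S → S.card ≤ t → ∃ B ∈ F, Disjoint B S) →
    (w + t).choose 2 ≤ (pcov F).card := by
  intro t
  induction t with
  | zero =>
    intro hw F hcard hτ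
    obtain ⟨B, hB, -⟩ := hτ ∅ (by simp) (by simp)
    calc (w + 0).choose 2 = (B.powersetCard 2).card := by
          rw [card_powersetCard, hcard B hB, Nat.add_zero]
      _ ≤ (pcov F).card := card_le_card (by
          intro p hp; rw [mem_pcov]; rw [mem_powersetCard] at hp
          exact ⟨B, hB, hp.1, hp.2⟩)
  | succ t IH =>
    intro hw F hcard hτ
    have hw' : t ^ 2 + 2 * t + 2 ≤ w := by nlinarith
    by_cases hx : ∃ x, x ≠ o ∧ w + t ≤ (((F.filter fun B => x ∈ B).biUnion id).erase x).card
    · obtain ⟨x, hxo, hxN⟩ := hx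
      have hrec : (w + t).choose 2 ≤ (pcov (F.filter fun B => x ∉ B)).card := by
        apply IH hw' (F.filter fun B => x ∉ B)
        · intro B hB; exact hcard B (mem_of_mem_filter _ hB)
        · intro S hoS hScard
          obtain ⟨B, hB, hdisj⟩ := hτ (insert x S)
            (by simp [Ne.symm hxo, hoS])
            (le_trans (card_insert_le _ _) (by omega))
          rw [disjoint_insert_right] at hdisj
          exact ⟨B, mem_filter.2 ⟨hB, hdisj.1⟩, hdisj.2⟩
      have hsb := star_bound F x hxN hrec
      calc (w + (t + 1)).choose 2 = (w + t).choose 2 + (w + t) := by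
            rw [show w + (t + 1) = (w + t) + 1 by omega, choose_two_succ]
        _ ≤ (pcov F).card := hsb
    · push_neg at hx
      apply lem_K o w (t + 1) (by nlinarith) (t + 1) le_rfl F hcard _ hτ
      intro B hB B' hB' hne hsh
      obtain ⟨x, hx2, hxo⟩ := hsh
      rw [mem_inter] at hx2
      have hxlt := hx x hxo
      have hcup : ((B ∪ B').erase x) ⊆ ((F.filter fun B'' => x ∈ B'').biUnion id).erase x := by
        intro y hy
        rw [mem_erase] at hy ⊢
        refine ⟨hy.1, ?_⟩
        rw [mem_biUnion]
        rcases mem_union.1 hy.2 with h | h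
        · exact ⟨B, mem_filter.2 ⟨hB, hx2.1⟩, h⟩
        · exact ⟨B', mem_filter.2 ⟨hB', hx2.2⟩, h⟩
      have hxU : x ∈ B ∪ B' := mem_union_left _ hx2.1
      have h1 : (B ∪ B').card - 1 ≤ (((F.filter fun B'' => x ∈ B'').biUnion id).erase x).card := by
        rw [← card_erase_of_mem hxU]
        exact card_le_card hcup
      have hie := card_inter_add_card_union B B'
      have hBw := hcard B hB
      have hB'w := hcard B' hB'
      omega

-- ### lifting to Option α

private def liftB {α : Type*} [DecidableEq α] (w : ℕ) (B : Finset α) : Finset (Option α) :=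
  if B.card = w then B.image some else insert none (B.image some)

private lemma some_mem_liftB {α : Type*} [DecidableEq α] {w : ℕ} {B : Finset α} {a : α} :
    some a ∈ liftB w B ↔ a ∈ B := by
  unfold liftB; split <;> simp

private lemma none_mem_liftB {α : Type*} [DecidableEq α] {w : ℕ} {B : Finset α} :
    none ∈ liftB w B → B.card ≠ w := by
  unfold liftB; split
  · intro h; simp at h
  · intro _; assumption

private lemma card_liftB {α : Type*} [DecidableEq α] {w : ℕ} {B : Finset α}
    (h : B.card = w ∨ B.card + 1 = w) : (liftB w B).card = w := by
  unfold liftB; split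
  · rw [card_image_of_injective _ (Option.some_injective α)]; assumption
  · rw [card_insert_of_notMem (by simp), card_image_of_injective _ (Option.some_injective α)]
    omega

private lemma liftB_subset {α : Type*} [DecidableEq α] {w : ℕ} {B Z : Finset α} (h : B ⊆ Z) :
    liftB w B ⊆ insert none (Z.image some) := by
  intro x hx
  match x with
  | none => exact mem_insert_self _ _
  | some a => exact mem_insert_of_mem (mem_image_of_mem _ (h (some_mem_liftB.1 hx)))

private lemma pcov_lift_subset {α : Type*} [DecidableEq α] (w : ℕ) (Q : Finset (Finset α))
    (Z : Finset α) (hQ : ∀ B ∈ Q, B ⊆ Z) :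
    pcov (Q.image (liftB w)) ⊆ (insert none (Z.image some)).powersetCard 2 := by
  intro p hp
  rw [mem_pcov] at hp
  obtain ⟨B', hB', hpB', hpc⟩ := hp
  obtain ⟨B, hB, rfl⟩ := mem_image.1 hB'
  rw [mem_powersetCard]
  exact ⟨hpB'.trans (liftB_subset (hQ B hB)), hpc⟩

/-- cross-family disjointness of lifted pair covers -/
private lemma pcov_lift_disjoint {α : Type*} [DecidableEq α] (w : ℕ)
    (Q Q' : Finset (Finset α))
    (hkey : ∀ B ∈ Q, ∀ B' ∈ Q',
      (B ∩ B').card ≤ 1 ∧ (B.card + B'.card + 2 ≤ 2 * w → Disjoint B B'))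
    (hmin : ∀ B ∈ Q, w ≤ B.card + 1) (hmin' : ∀ B' ∈ Q', w ≤ B'.card + 1)
    (hmax : ∀ B ∈ Q, B.card ≤ w) (hmax' : ∀ B' ∈ Q', B'.card ≤ w) :
    Disjoint (pcov (Q.image (liftB w))) (pcov (Q'.image (liftB w))) := by
  rw [disjoint_left]
  intro p hp hp'
  rw [mem_pcov] at hp hp'
  obtain ⟨C, hC, hpC, hpc⟩ := hp
  obtain ⟨C', hC', hpC', -⟩ := hp'
  obtain ⟨B, hB, rfl⟩ := mem_image.1 hC
  obtain ⟨B', hB', rfl⟩ := mem_image.1 hC'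
  obtain ⟨u, v, huv, rfl⟩ := card_eq_two.1 hpc
  have humem := hpC (mem_insert_self u {v})
  have hvmem := hpC (mem_insert_of_mem (mem_singleton_self v))
  have humem' := hpC' (mem_insert_self u {v})
  have hvmem' := hpC' (mem_insert_of_mem (mem_singleton_self v))
  match u, v with
  | some a, some c =>
    have hac : a ≠ c := fun h => huv (by rw [h])
    have h2 : ({a, c} : Finset α) ⊆ B ∩ B' := by
      intro x hx
      rcases mem_insert.1 hx with rfl | hx
      · exact mem_inter.2 ⟨some_mem_liftB.1 humem, some_mem_liftB.1 humem'⟩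
      · rw [mem_singleton] at hx; subst hx
        exact mem_inter.2 ⟨some_mem_liftB.1 hvmem, some_mem_liftB.1 hvmem'⟩
    have h3 : 2 ≤ (B ∩ B').card := by
      calc 2 = ({a, c} : Finset α).card := by
            rw [card_insert_of_notMem (by simp [hac]), card_singleton]
        _ ≤ _ := card_le_card h2
    have := (hkey B hB B' hB').1
    omega
  | none, none => exact huv rfl
  | none, some c =>
    have hBm := none_mem_liftB humem
    have hB'm := none_mem_liftB humem'
    have h1 := hmin B hB; have h2 := hmin' B' hB'
    have h3 := hmax B hB; have h4 := hmax' B' hB'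
    have hdj := (hkey B hB B' hB').2 (by omega)
    exact disjoint_left.1 hdj (some_mem_liftB.1 hvmem) (some_mem_liftB.1 hvmem')
  | some a, none =>
    have hBm := none_mem_liftB hvmem
    have hB'm := none_mem_liftB hvmem'
    have h1 := hmin B hB; have h2 := hmin' B' hB'
    have h3 := hmax B hB; have h4 := hmax' B' hB'
    have hdj := (hkey B hB B' hB').2 (by omega)
    exact disjoint_left.1 hdj (some_mem_liftB.1 humem) (some_mem_liftB.1 humem')

-- ### arithmetic for the exceptional family

private lemma arith_E1 (s q m : ℕ) (h1 : 1 ≤ s) (hm : 1 ≤ m) (hsq : s ≤ q)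
    (hsm : s ≤ 2 * m + 1) :
    s.choose 2 + q.choose 2 ≤ (q + m).choose 2 := by
  have e1 := two_mul_choose_two s
  have e2 := two_mul_choose_two q
  have e3 := two_mul_choose_two (q + m)
  have key : s * (s - 1) + q * (q - 1) ≤ (q + m) * (q + m - 1) := by
    obtain ⟨d, rfl⟩ : ∃ d, q = s + d := ⟨q - s, by omega⟩
    obtain ⟨s', rfl⟩ : ∃ s', s = s' + 1 := ⟨s - 1, by omega⟩
    have r1 : s' + 1 - 1 = s' := by omega
    have r2 : s' + 1 + d - 1 = s' + d := by omega
    have r3 : s' + 1 + d + m - 1 = s' + d + m := by omega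
    rw [r1, r2, r3]
    nlinarith [Nat.zero_le (d * m), Nat.zero_le (s' * d)]
  omega

private lemma arith_E2 (t m q : ℕ) (ht : 1 ≤ t) (hq : m + t + 3 ≤ q)
    (hm : t ^ 2 + 2 * t ≤ m + 1) :
    (m + t + 3).choose 2 + q.choose 2 ≤ (q + m).choose 2 + 6 := by
  have e1 := two_mul_choose_two (m + t + 3)
  have r1 : m + t + 3 - 1 = m + t + 2 := by omega
  rw [r1] at e1
  have e2 := two_mul_choose_two q
  have e3 := two_mul_choose_two (q + m)
  have key : (m + t + 3) * (m + t + 2) + q * (q - 1) ≤ (q + m) * (q + m - 1) + 12 := by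
    obtain ⟨d, rfl⟩ : ∃ d, q = m + t + 3 + d := ⟨q - (m + t + 3), by omega⟩
    have r2 : m + t + 3 + d - 1 = m + t + 2 + d := by omega
    have r3 : m + t + 3 + d + m - 1 = m + t + 2 + d + m := by omega
    rw [r2, r3]
    have hm2 : 3 * t ≤ m + 1 := by nlinarith
    nlinarith [Nat.zero_le (d * m), Nat.zero_le (m * m), sq_nonneg (t - 1)]
  omega


private lemma quota {α : Type*} [DecidableEq α] (w t : ℕ) (hw : t ^ 2 + 2 * t + 2 ≤ w)
    (Q : Finset (Finset α))
    (hsz : ∀ B ∈ Q, B.card = w ∨ B.card + 1 = w)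
    (havoid : ∀ S₀ : Finset α, S₀.card ≤ t → ∃ B ∈ Q, Disjoint B S₀) :
    (w + t).choose 2 ≤ (pcov (Q.image (liftB w))).card := by
  apply lem_L (none : Option α) w t hw
  · intro B' hB'
    obtain ⟨B, hB, rfl⟩ := mem_image.1 hB'
    exact card_liftB (hsz B hB)
  · intro S hnS hScard
    have hinj : Set.InjOn some (some ⁻¹' ↑S) := fun a _ b _ h => Option.some_injective α h
    have hcard0 : (S.preimage some hinj).card ≤ S.card :=
      card_le_card_of_injOn some (fun a ha => mem_preimage.1 ha)
        (fun a _ b _ h => Option.some_injective α h)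
    obtain ⟨B, hB, hdisj⟩ := havoid (S.preimage some hinj) (le_trans hcard0 hScard)
    refine ⟨liftB w B, mem_image_of_mem _ hB, ?_⟩
    rw [disjoint_left]
    intro x hxB hxS
    match x, hxB, hxS with
    | none, hxB, hxS => exact hnS hxS
    | some a, hxB, hxS =>
      exact disjoint_left.1 hdisj (some_mem_liftB.1 hxB) (mem_preimage.2 hxS)

theorem lpecc_upper_bound_large_w {α : Type*} [DecidableEq α] (n t w b : ℕ)
    (ht : 1 ≤ t) (hw : t ^ 2 + 2 * t + 2 ≤ w) (hn : w + t - 1 ≤ n)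
    (X : Finset α) (P : Fin b → Finset (Finset α))
    (hP : IsLPECC n t w (w - 2) X P) :
    b ≤ (n + 1).choose 2 / (w + t).choose 2 := by
  classical
  obtain ⟨hX, hsub, -, hA, hwb, hdist⟩ := hP
  have ht2 : 1 ≤ t ^ 2 := Nat.one_le_pow _ _ (by omega)
  have htw : t + 3 ≤ w := by nlinarith
  have hw5 : 5 ≤ w := by omega
  have hpos : 0 < (w + t).choose 2 := Nat.choose_pos (by omega)
  have htn : t ≤ n := by omega
  have hwtn : w + t ≤ n + 1 := by omega
  rw [Nat.le_div_iff_mul_le hpos]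
  -- extension of property A(t) to sets of size ≤ t
  have ext : ∀ i : Fin b, ∀ S₀ : Finset α, S₀.card ≤ t → ∃ B ∈ P i, Disjoint B S₀ := by
    intro i S₀ hS₀
    obtain ⟨T, hT1, hT2, hT3⟩ := exists_subsuperset_card_eq
      (show S₀ ∩ X ⊆ X from inter_subset_right)
      (le_trans (card_le_card inter_subset_left) hS₀) (by rw [hX]; exact htn)
    obtain ⟨B, hB, hdj⟩ := hA T hT2 hT3 i
    refine ⟨B, hB, ?_⟩
    rw [disjoint_left]
    intro a haB haS
    exact disjoint_left.1 hdj haB (hT1 (mem_inter.2 ⟨haS, hsub i B hB haB⟩))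
  have haux : ∀ B B' : Finset α,
      (symmDiff B B').card + (B ∩ B').card + (B ∩ B').card = B.card + B'.card := by
    intro B B'
    have h1 : symmDiff B B' = (B \ B') ∪ (B' \ B) := symmDiff_def B B' ▸ rfl
    have h2 : ((B \ B') ∪ (B' \ B)).card = (B \ B').card + (B' \ B).card :=
      card_union_of_disjoint disjoint_sdiff_sdiff
    have h3 := card_sdiff_add_card_inter B B'
    have h4 := card_sdiff_add_card_inter B' B
    rw [inter_comm] at h4
    rw [h1]
    omega
  have key : ∀ i j : Fin b, i ≠ j → ∀ B ∈ P i, ∀ B' ∈ P j,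
      ((B ∩ B').card ≤ 1 ∧ (B.card + B'.card + 2 ≤ 2 * w → Disjoint B B')) ∧ w ≤ B.card + 3 := by
    intro i j hij B hB B' hB'
    have hd := hdist i j hij B hB B' hB'
    have ha := haux B B'
    have h1 := hwb i B hB
    have h2 := hwb j B' hB'
    refine ⟨⟨by omega, fun hle => ?_⟩, by omega⟩
    have h0 : (B ∩ B').card = 0 := by omega
    exact disjoint_iff_inter_eq_empty.2 (card_eq_zero.1 h0)
  rcases Nat.lt_or_ge b 2 with hb | hb
  · obtain rfl | rfl : b = 0 ∨ b = 1 := by omega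
    · simp
    · simpa using Nat.choose_le_choose 2 hwtn
  -- from now on b ≥ 2
  set Y₀ : Finset (Option α) := insert none (X.image some) with hY₀
  have hY₀card : Y₀.card = n + 1 := by
    rw [hY₀, card_insert_of_notMem (by simp),
      card_image_of_injective _ (Option.some_injective α), hX]
  have hother : ∀ i : Fin b, ∃ j : Fin b, j ≠ i := by
    intro i
    by_cases h : i = ⟨0, by omega⟩
    · exact ⟨⟨1, by omega⟩, by subst h; simp [Fin.ext_iff]⟩
    · exact ⟨⟨0, by omega⟩, fun hc => h hc.symm⟩
  have hmin3 : ∀ i : Fin b, ∀ B ∈ P i, w ≤ B.card + 3 := by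
    intro i B hB
    obtain ⟨j, hj⟩ := hother i
    obtain ⟨B', hB', -⟩ := ext j ∅ (by simp)
    exact (key i j (Ne.symm hj) B hB B' hB').2
  have hfinal : ∀ ρ : Fin b → Finset (Finset (Option α)),
      (∀ i, ρ i ⊆ Y₀.powersetCard 2) →
      (∀ i j, i ≠ j → Disjoint (ρ i) (ρ j)) →
      (∀ i, (w + t).choose 2 ≤ (ρ i).card) →
      b * (w + t).choose 2 ≤ (n + 1).choose 2 := by
    intro ρ hsub2 hdisj2 hquota2
    have h1 : b * (w + t).choose 2 = ∑ _i : Fin b, (w + t).choose 2 := by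
      rw [Finset.sum_const, Finset.card_univ, Fintype.card_fin, smul_eq_mul]
    rw [h1]
    calc ∑ _i : Fin b, (w + t).choose 2
        ≤ ∑ i : Fin b, (ρ i).card := Finset.sum_le_sum fun i _ => hquota2 i
      _ = ((univ : Finset (Fin b)).biUnion ρ).card :=
          (card_biUnion fun i _ j _ hij => hdisj2 i j hij).symm
      _ ≤ (Y₀.powersetCard 2).card := card_le_card (by
          intro p hp
          rw [mem_biUnion] at hp
          obtain ⟨i, -, hp⟩ := hp
          exact hsub2 i hp)
      _ = (n + 1).choose 2 := by rw [card_powersetCard, hY₀card]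
  by_cases hexc : ∃ i₀ : Fin b, ∃ B₀ ∈ P i₀, B₀.card + 2 ≤ w
  · -- exceptional family exists
    obtain ⟨i₀, B₀, hB₀, hB₀sm⟩ := hexc
    set smalls := (P i₀).filter (fun B => B.card + 2 ≤ w) with hsm
    set W := smalls.biUnion id with hWdef
    set m := W.card with hm
    set bigs := (P i₀).filter (fun B => w ≤ B.card + 1) with hbg
    set W' := W.image some with hW'def
    have hsizes_j : ∀ j : Fin b, j ≠ i₀ → ∀ B' ∈ P j, w ≤ B'.card + 1 := by
      intro j hj B' hB'
      have hd := hdist i₀ j (Ne.symm hj) B₀ hB₀ B' hB'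
      have hax := haux B₀ B'
      have h1 := hwb i₀ B₀ hB₀
      omega
    have hWX : W ⊆ X := by
      intro x hx
      rw [hWdef, mem_biUnion] at hx
      obtain ⟨B, hB, hxB⟩ := hx
      exact hsub i₀ B (mem_of_mem_filter _ hB) hxB
    have havoidW : ∀ j : Fin b, j ≠ i₀ → ∀ B' ∈ P j, ∀ x ∈ B', x ∉ W := by
      intro j hj B' hB' x hxB' hxW
      rw [hWdef, mem_biUnion] at hxW
      obtain ⟨Bs, hBs, hxBs⟩ := hxW
      have hBsP := mem_of_mem_filter _ hBs
      have hBssm := (mem_filter.1 hBs).2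
      have hwB' := hwb j B' hB'
      have hK := (key i₀ j (Ne.symm hj) Bs hBsP B' hB').1.2 (by omega)
      exact disjoint_left.1 hK hxBs hxB'
    obtain ⟨j₁, hj₁⟩ := hother i₀
    set U := (P j₁).biUnion id with hUdef
    have hUX : U ⊆ X := by
      intro x hx
      rw [hUdef, mem_biUnion] at hx
      obtain ⟨B, hB, hxB⟩ := hx
      exact hsub j₁ B hB hxB
    have hUW : Disjoint U W := by
      rw [disjoint_left]
      intro x hx hxW
      rw [hUdef, mem_biUnion] at hx
      obtain ⟨B', hB', hxB'⟩ := hx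
      exact havoidW j₁ hj₁ B' hB' x hxB' hxW
    have hquotaj : ∀ j : Fin b, j ≠ i₀ →
        (w + t).choose 2 ≤ (pcov ((P j).image (liftB w))).card := by
      intro j hj
      apply quota w t hw (P j) _ (ext j)
      intro B hB
      have h1 := hwb j B hB
      have h2 := hsizes_j j hj B hB
      omega
    have hUcard : w + t ≤ U.card + 1 := by
      by_contra hc
      push_neg at hc
      have h1 : pcov ((P j₁).image (liftB w)) ⊆ (insert none (U.image some)).powersetCard 2 := by
        apply pcov_lift_subset
        intro B hB
        exact subset_biUnion_of_mem id hB
      have h2 := le_trans (hquotaj j₁ hj₁) (card_le_card h1)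
      rw [card_powersetCard, card_insert_of_notMem (by simp),
        card_image_of_injective _ (Option.some_injective α)] at h2
      have h4 : (U.card + 1).choose 2 ≤ (w + t - 1).choose 2 :=
        Nat.choose_le_choose 2 (by omega)
      have h5 : (w + t - 1).choose 2 + (w + t - 1) = (w + t).choose 2 := by
        have := choose_two_succ (w + t - 1)
        rw [show w + t - 1 + 1 = w + t by omega] at this
        omega
      have h6 : 0 < w + t - 1 := by omega
      omega
    have hmn : U.card + m ≤ n := by
      rw [← hX]
      calc U.card + m = (U ∪ W).card := (card_union_of_disjoint hUW).symm
        _ ≤ X.card := card_le_card (union_subset hUX hWX)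
    have hmw : w ≤ m + 3 := by
      have h1 : B₀ ⊆ W := by
        intro x hx
        rw [hWdef, mem_biUnion]
        exact ⟨B₀, mem_filter.2 ⟨hB₀, hB₀sm⟩, hx⟩
      have h2 := card_le_card h1
      have h3 := hmin3 i₀ B₀ hB₀
      omega
    set R := (Y₀.powersetCard 2).filter (fun p => ¬ Disjoint p W') with hRdef
    have hW'Y : W' ⊆ Y₀ := by
      intro x hx
      rw [hW'def] at hx
      obtain ⟨a, ha, rfl⟩ := mem_image.1 hx
      exact mem_insert_of_mem (mem_image_of_mem _ (hWX ha))
    have hW'card : W'.card = m := by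
      rw [hW'def, card_image_of_injective _ (Option.some_injective α), hm]
    have hRcard : R.card + (n + 1 - m).choose 2 = (n + 1).choose 2 := by
      have hfilt : (Y₀.powersetCard 2).filter (fun p => Disjoint p W') =
          (Y₀ \ W').powersetCard 2 := by
        ext p
        rw [mem_filter, mem_powersetCard, mem_powersetCard, subset_sdiff]
        tauto
      have hcards : (Y₀ \ W').card = n + 1 - m := by
        rw [card_sdiff_of_subset hW'Y, hY₀card, hW'card]
      have hsplit := card_filter_add_card_filter_not
        (s := Y₀.powersetCard 2) (p := fun p => Disjoint p W')
      rw [hfilt, card_powersetCard, hcards, card_powersetCard, hY₀card] at hsplit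
      rw [hRdef]
      omega
    set ρexc := R ∪ pcov (bigs.image (liftB w)) with hρexc
    have hρsub : ρexc ⊆ Y₀.powersetCard 2 := by
      rw [hρexc]
      apply union_subset (filter_subset _ _)
      apply pcov_lift_subset
      intro B hB
      exact hsub i₀ B (mem_of_mem_filter _ hB)
    have hquota0 : (w + t).choose 2 ≤ ρexc.card := by
      have hmlow : 2 ≤ m := by omega
      by_cases hm2 : w ≤ m + 2
      · -- E1 : the pairs meeting W already suffice
        have hE1 := arith_E1 (w + t) (n + 1 - m) m (by omega) (by omega) (by omega) (by omega)
        rw [show n + 1 - m + m = n + 1 by omega] at hE1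
        have h2 : (w + t).choose 2 ≤ R.card := by omega
        exact le_trans h2 (card_le_card subset_union_left)
      · -- E2 : m = w - 3
        have hmeq : m + 3 = w := by omega
        have hsmeq : ∀ Bs ∈ smalls, Bs = W := by
          intro Bs hBs
          have h1 : Bs ⊆ W := by
            intro x hx
            rw [hWdef, mem_biUnion]
            exact ⟨Bs, hBs, hx⟩
          have h2 := hmin3 i₀ Bs (mem_of_mem_filter _ hBs)
          exact eq_of_subset_of_card_le h1 (by omega)
        have hWne : W.Nonempty := by
          rw [← card_pos]
          omega
        obtain ⟨z₀, hz₀⟩ := hWne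
        obtain ⟨B₂, hB₂, hB₂dj⟩ := ext i₀ {z₀} (by simpa using ht)
        have hB₂z : z₀ ∉ B₂ := fun h => disjoint_left.1 hB₂dj h (mem_singleton_self z₀)
        have hB₂big : w ≤ B₂.card + 1 := by
          by_contra hc
          push_neg at hc
          have hsm2 : B₂ ∈ smalls := mem_filter.2 ⟨hB₂, by omega⟩
          rw [hsmeq B₂ hsm2] at hB₂z
          exact hB₂z hz₀
        set trace := liftB w B₂ \ W' with htr
        have htrcard : 4 ≤ trace.card := by
          have h1 : liftB w B₂ ∩ W' ⊆ W'.erase (some z₀) := by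
            intro x hx
            rw [mem_inter] at hx
            have hx2 := hx.2
            rw [hW'def] at hx2
            obtain ⟨a, haW, rfl⟩ := mem_image.1 hx2
            rw [mem_erase]
            refine ⟨?_, hx.2⟩
            intro h
            have haz : a = z₀ := by simpa using h
            subst haz
            exact hB₂z (some_mem_liftB.1 hx.1)
          have h2 := card_le_card h1
          have h3 : (W'.erase (some z₀)).card = m - 1 := by
            rw [card_erase_of_mem (by rw [hW'def]; exact mem_image_of_mem _ hz₀), hW'card]
          have h4 := card_sdiff_add_card_inter (liftB w B₂) W'
          have h5 : (liftB w B₂).card = w := card_liftB (by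
            have := hwb i₀ B₂ hB₂
            omega)
          rw [← htr] at h4
          omega
        have hΔsub : trace.powersetCard 2 ⊆ pcov (bigs.image (liftB w)) := by
          intro p hp
          rw [mem_powersetCard] at hp
          rw [mem_pcov]
          exact ⟨liftB w B₂, mem_image_of_mem _ (mem_filter.2 ⟨hB₂, hB₂big⟩),
            hp.1.trans sdiff_subset, hp.2⟩
        have hΔR : Disjoint (trace.powersetCard 2) R := by
          rw [disjoint_left]
          intro p hp hpR
          rw [mem_powersetCard] at hp
          exact (mem_filter.1 hpR).2 (disjoint_of_subset_left hp.1 sdiff_disjoint)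
        have hΔcard : 6 ≤ (trace.powersetCard 2).card := by
          rw [card_powersetCard]
          calc 6 = Nat.choose 4 2 := by decide
            _ ≤ trace.card.choose 2 := Nat.choose_le_choose 2 htrcard
        have hsplit : R.card + 6 ≤ ρexc.card := by
          calc R.card + 6 ≤ R.card + (trace.powersetCard 2).card := by omega
            _ = (R ∪ trace.powersetCard 2).card := (card_union_of_disjoint hΔR.symm).symm
            _ ≤ ρexc.card := card_le_card
                (union_subset subset_union_left (hΔsub.trans subset_union_right))
        have hE2 := arith_E2 t m (n + 1 - m) ht (by omega) (by omega)
        rw [show m + t + 3 = w + t by omega, show n + 1 - m + m = n + 1 by omega] at hE2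
        omega
    have hd0 : ∀ j : Fin b, j ≠ i₀ → Disjoint ρexc (pcov ((P j).image (liftB w))) := by
      intro j hj
      rw [hρexc, disjoint_union_left]
      constructor
      · rw [disjoint_left]
        intro p hpR hpj
        have hnd := (mem_filter.1 hpR).2
        obtain ⟨x, hxp, hxW'⟩ := not_disjoint_iff.1 hnd
        rw [hW'def] at hxW'
        obtain ⟨a, haW, rfl⟩ := mem_image.1 hxW'
        rw [mem_pcov] at hpj
        obtain ⟨C, hC, hpC, -⟩ := hpj
        obtain ⟨B', hB', rfl⟩ := mem_image.1 hC
        exact havoidW j hj B' hB' a (some_mem_liftB.1 (hpC hxp)) haW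
      · apply pcov_lift_disjoint w bigs (P j)
        · intro B hB B' hB'
          exact (key i₀ j (Ne.symm hj) B (mem_of_mem_filter _ hB) B' hB').1
        · intro B hB
          exact (mem_filter.1 hB).2
        · intro B' hB'
          exact hsizes_j j hj B' hB'
        · intro B hB
          exact hwb i₀ B (mem_of_mem_filter _ hB)
        · exact hwb j
    apply hfinal (fun i => if i = i₀ then ρexc else pcov ((P i).image (liftB w)))
    · intro i
      by_cases hi : i = i₀
      · simpa [hi] using hρsub
      · simpa [hi] using pcov_lift_subset w (P i) X (hsub i)
    · intro i j hij
      by_cases hi : i = i₀ <;> by_cases hj2 : j = i₀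
      · exact absurd (hi.trans hj2.symm) hij
      · simpa [hi, hj2] using hd0 j hj2
      · simpa [hi, hj2] using (hd0 i hi).symm
      · simp only [if_neg hi, if_neg hj2]
        apply pcov_lift_disjoint w (P i) (P j)
        · intro B hB B' hB'
          exact (key i j hij B hB B' hB').1
        · intro B hB
          exact hsizes_j i hi B hB
        · intro B' hB'
          exact hsizes_j j hj2 B' hB'
        · exact hwb i
        · exact hwb j
    · intro i
      by_cases hi : i = i₀
      · simpa [hi] using hquota0
      · simpa [hi] using hquotaj i hi
  · -- no exceptional family
    push_neg at hexc
    apply hfinal (fun i => pcov ((P i).image (liftB w)))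
    · intro i
      exact pcov_lift_subset w (P i) X (hsub i)
    · intro i j hij
      apply pcov_lift_disjoint w (P i) (P j)
      · intro B hB B' hB'
        exact (key i j hij B hB B' hB').1
      · intro B hB
        have := hexc i B hB
        omega
      · intro B' hB'
        have := hexc j B' hB'
        omega
      · exact hwb i
      · exact hwb j
    · intro i
      apply quota w t hw (P i) _ (ext i)
      intro B hB
      have h1 := hwb i B hB
      have h2 := hexc i B hB
      omega
end

section
/- Let t ≥ 1 and w be integers with w > t² + 2t + 2, and suppose n satisfies binom(w+t, 2) ∣ binom(n+1, 2). Let (X, (P_1, …, P_b)) be an (n, t, w, w−2)-LPECC code with b = binom(n+1, 2)/binom(w+t, 2) > 1. Then: (i) every block in ⋃_i P_i has size w−1 or w; (ii) (w+t−1) ∣ n; (iii) for each i ∈ {1, …, b}, writing U(P_i) for the union of all blocks of P_i, either |U(P_i)| = w+t−1 and every (w−1)-subset of U(P_i) belongs to P_i, or |U(P_i)| = w+t and P_i equals the family of all w-subsets of U(P_i); (iv) the pair (X ∪ {∞}, D) is an (n+1, w+t, 1)-BIBD, where ∞ ∉ X and D = { U(P_i) ∪ {∞} : |U(P_i)| =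 w+t−1 } ∪ { U(P_i) : |U(P_i)| = w+t }. -/
set_option maxHeartbeats 1000000

open Finset

lemma two_mul_choose_two_s5 (x : ℕ) : 2 * (x + 1).choose 2 = (x + 1) * x := by
  rw [Nat.choose_two_right]
  simp only [Nat.add_sub_cancel]
  rw [Nat.mul_div_cancel']
  simpa [Nat.mul_comm] using (Nat.even_mul_succ_self x).two_dvd

lemma choose_two_add_choose_two_le (x y : ℕ) : x.choose 2 + y.choose 2 ≤ (x + y).choose 2 := by
  rcases Nat.eq_zero_or_pos x with hx | hx
  · simp [hx]
  rcases Nat.eq_zero_or_pos y with hy | hy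
  · simp [hy]
  obtain ⟨x', rfl⟩ : ∃ x', x = x' + 1 := ⟨x - 1, by omega⟩
  obtain ⟨y', rfl⟩ : ∃ y', y = y' + 1 := ⟨y - 1, by omega⟩
  have h := two_mul_choose_two_s5 x'
  have h2 := two_mul_choose_two_s5 y'
  have h3 := two_mul_choose_two_s5 (x' + y' + 1)
  have : (x' + 1) + (y' + 1) = (x' + y' + 1) + 1 := by omega
  rw [this]
  nlinarith

lemma G_superadd (w a b : ℕ) :
    w.choose 2 - (w - (a + b)).choose 2 ≤
      (w.choose 2 - (w - a).choose 2) + (w.choose 2 - (w - b).choose 2) := by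
  have hma : (w - a).choose 2 ≤ w.choose 2 := Nat.choose_le_choose 2 (Nat.sub_le _ _)
  have hmb : (w - b).choose 2 ≤ w.choose 2 := Nat.choose_le_choose 2 (Nat.sub_le _ _)
  have hmab : (w - (a + b)).choose 2 ≤ w.choose 2 := Nat.choose_le_choose 2 (Nat.sub_le _ _)
  have key : (w - a).choose 2 + (w - b).choose 2 ≤ w.choose 2 + (w - (a + b)).choose 2 := by
    rcases le_or_gt w a with hwa | hwa
    · have h0 : w - a = 0 := by omega
      rw [h0]; simpa using le_trans hmb (Nat.le_add_right _ _)
    rcases le_or_gt w b with hwb | hwb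
    · have h0 : w - b = 0 := by omega
      rw [h0]; simpa using le_trans hma (Nat.le_add_right _ _)
    rcases le_or_gt w (a + b) with hab | hab
    · have h0 : w - (a + b) = 0 := by omega
      rw [h0]
      have h1 : (w - a) + (w - b) ≤ w := by omega
      simpa using le_trans (choose_two_add_choose_two_le _ _) (Nat.choose_le_choose 2 h1)
    · obtain ⟨p, hp⟩ : ∃ p, w - (a + b) = p + 1 := ⟨w - (a+b) - 1, by omega⟩
      have hwa' : w - a = (p + b) + 1 := by omega
      have hwb' : w - b = (p + a) + 1 := by omega
      have hw' : w = (p + a + b) + 1 := by omega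
      rw [hwa', hwb', hp, hw']
      have e1 := two_mul_choose_two_s5 (p + b)
      have e2 := two_mul_choose_two_s5 (p + a)
      have e3 := two_mul_choose_two_s5 (p + a + b)
      have e4 := two_mul_choose_two_s5 p
      nlinarith
  omega


section LPECCAux
variable {α : Type*} [DecidableEq α]

lemma card_symmDiff_eq (B B' : Finset α) :
    (symmDiff B B').card + 2 * (B ∩ B').card = B.card + B'.card := by
  rw [symmDiff_eq_sup_sdiff_inf]
  have h1 : ((B ⊔ B') \ (B ⊓ B')).card = (B ∪ B').card - (B ∩ B').card := by
    rw [card_sdiff_of_subset]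
    · rfl
    · exact (inter_subset_left).trans subset_union_left
  have h2 := card_union_add_card_inter B B'
  have h3 : (B ∩ B').card ≤ (B ∪ B').card :=
    card_le_card ((inter_subset_left).trans subset_union_left)
  omega


def hatB (inf : α) (w : ℕ) (B : Finset α) : Finset α :=
  if B.card < w then insert inf B else B

def Qpart (inf : α) (w : ℕ) (Y : Finset α) (Pi : Finset (Finset α)) : Finset (Finset α) :=
  (Y.powersetCard 2).filter
    (fun s => ∃ B ∈ Pi, s ⊆ hatB inf w B ∨ (B.card + 2 ≤ w ∧ ¬ Disjoint s B))

lemma mem_Qpart {inf : α} {w : ℕ} {Y : Finset α} {Pi : Finset (Finset α)} {s : Finset α} :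
    s ∈ Qpart inf w Y Pi ↔
      (s ⊆ Y ∧ s.card = 2) ∧ ∃ B ∈ Pi, s ⊆ hatB inf w B ∨ (B.card + 2 ≤ w ∧ ¬ Disjoint s B) := by
  simp [Qpart, mem_filter, mem_powersetCard]

lemma subset_hatB {inf : α} {w : ℕ} {B : Finset α} : B ⊆ hatB inf w B := by
  unfold hatB; split
  · exact subset_insert _ _
  · exact Subset.rfl

lemma hatB_subset_insert {inf : α} {w : ℕ} {B : Finset α} : hatB inf w B ⊆ insert inf B := by
  unfold hatB; split
  · exact Subset.rfl
  · exact subset_insert _ _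

lemma card_hatB {inf : α} {w : ℕ} {B : Finset α} (hinf : inf ∉ B)
    (h1 : w ≤ B.card + 1) (h2 : B.card ≤ w) : (hatB inf w B).card = w := by
  unfold hatB; split
  · rw [card_insert_of_notMem hinf]; omega
  · omega


lemma pair_decomp {z : α} {u : Finset α} (hz : z ∈ u) (hc : u.card = 2) :
    ∃ q, q ≠ z ∧ u = insert z {q} := by
  have h1 : (u.erase z).card = 1 := by rw [card_erase_of_mem hz, hc]
  obtain ⟨q, hq⟩ := card_eq_one.mp h1
  refine ⟨q, ?_, ?_⟩
  · have : q ∈ u.erase z := hq ▸ mem_singleton_self q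
    exact ne_of_mem_erase this
  · rw [← insert_erase hz, hq]


variable {inf : α} {X : Finset α} {Pi : Finset (Finset α)} {t w : ℕ}

lemma sup_subset_X (hBX : ∀ B ∈ Pi, B ⊆ X) : Pi.sup id ⊆ X := by
  intro x hx
  rw [mem_sup] at hx
  obtain ⟨B, hB, hxB⟩ := hx
  exact hBX B hB hxB

lemma window (hBX : ∀ B ∈ Pi, B ⊆ X)
    (hA : ∀ T ⊆ X, T.card = t → ∃ B ∈ Pi, Disjoint B T)
    {T : Finset α} (hT : T ⊆ Pi.sup id) (hTc : T.card = t) :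
    ∃ B ∈ Pi, B ⊆ Pi.sup id \ T := by
  obtain ⟨B, hB, hdisj⟩ := hA T (hT.trans (sup_subset_X hBX)) hTc
  refine ⟨B, hB, fun x hx => mem_sdiff.mpr ⟨?_, fun hxT => (hdisj.forall_ne_finset hx hxT) rfl⟩⟩
  exact (le_sup (f := id) hB : id B ≤ Pi.sup id) hx

/-- case `|U| ≥ w + t + 1`: strict inequality via the greedy argument. -/

lemma Pi_nonempty (htX : t ≤ X.card)
    (hA : ∀ T ⊆ X, T.card = t → ∃ B ∈ Pi, Disjoint B T) : Pi.Nonempty := by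
  obtain ⟨T, hT, hTc⟩ := exists_subset_card_eq htX
  obtain ⟨B, hB, -⟩ := hA T hT hTc
  exact ⟨B, hB⟩

lemma U_lb (htX : t ≤ X.card) (hBX : ∀ B ∈ Pi, B ⊆ X)
    (hA : ∀ T ⊆ X, T.card = t → ∃ B ∈ Pi, Disjoint B T)
    (hnotiny : ∀ B ∈ Pi, w ≤ B.card + 1) (htw : t + 1 ≤ w) :
    w + t ≤ (Pi.sup id).card + 1 := by
  obtain ⟨B₁, hB₁⟩ := Pi_nonempty htX hA
  have hB₁U : B₁ ⊆ Pi.sup id := le_sup (f := id) hB₁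
  have hUc : w ≤ (Pi.sup id).card + 1 :=
    le_trans (hnotiny B₁ hB₁) (by exact Nat.add_le_add_right (card_le_card hB₁U) 1)
  by_contra hcon
  push_neg at hcon
  have htU : t ≤ (Pi.sup id).card := by omega
  obtain ⟨T, hT, hTc⟩ := exists_subset_card_eq htU
  obtain ⟨B, hB, hBsub⟩ := window hBX hA hT hTc
  have h1 : B.card ≤ (Pi.sup id).card - t := by
    have := card_le_card hBsub
    rwa [card_sdiff_of_subset hT, hTc] at this
  have := hnotiny B hB
  omega


lemma Qpart_subset_pairs (hnotiny : ∀ B ∈ Pi, w ≤ B.card + 1) :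
    Qpart inf w (insert inf X) Pi ⊆ powersetCard 2 (insert inf (Pi.sup id)) := by
  intro s hs
  rw [mem_Qpart] at hs
  obtain ⟨⟨hsY, hsc⟩, B, hB, hcase⟩ := hs
  rw [mem_powersetCard]
  refine ⟨?_, hsc⟩
  rcases hcase with hhat | ⟨htiny, -⟩
  · exact hhat.trans (hatB_subset_insert.trans (insert_subset_insert _ (le_sup (f := id) hB)))
  · have := hnotiny B hB; omega

lemma mem_Qpart_of_pair_subset_block (hBX : ∀ B ∈ Pi, B ⊆ X) {s B : Finset α}
    (hB : B ∈ Pi) (hsB : s ⊆ B) (hsc : s.card = 2) :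
    s ∈ Qpart inf w (insert inf X) Pi := by
  rw [mem_Qpart]
  exact ⟨⟨hsB.trans ((hBX B hB).trans (subset_insert _ _)), hsc⟩, B, hB, Or.inl (hsB.trans subset_hatB)⟩

/-- decomposition of `|Q|` in the no-tiny case:
`|Q| + |uncov| = C(|U|+1, 2) ...` stated additively. -/
lemma Qpart_card_decomp (hinf : inf ∉ X) (hBX : ∀ B ∈ Pi, B ⊆ X)
    (hnotiny : ∀ B ∈ Pi, w ≤ B.card + 1) :
    (Qpart inf w (insert inf X) Pi).card
      + (((Pi.sup id).powersetCard 2) \ Qpart inf w (insert inf X) Pi).card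
    = ((Pi.sup id).card).choose 2
      + ((Pi.sup id).filter (fun x => ∃ B ∈ Pi, x ∈ B ∧ B.card < w)).card := by
  set U := Pi.sup id with hUdef
  set Q := Qpart inf w (insert inf X) Pi with hQdef
  have hUX : U ⊆ X := sup_subset_X hBX
  have hinfU : inf ∉ U := fun h => hinf (hUX h)
  have e2 : (Q.filter (fun s => inf ∈ s)).card + (Q.filter (fun s => inf ∉ s)).card = Q.card :=
    card_filter_add_card_filter_not _
  have e4 : Q.filter (fun s => inf ∉ s) = (U.powersetCard 2) ∩ Q := by
    ext s
    simp only [mem_filter, mem_inter, mem_powersetCard]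
    constructor
    · rintro ⟨hsQ, hsinf⟩
      have hsub := Qpart_subset_pairs hnotiny hsQ
      rw [mem_powersetCard] at hsub
      refine ⟨⟨?_, hsub.2⟩, hsQ⟩
      intro x hx
      rcases mem_insert.mp (hsub.1 hx) with rfl | h
      · exact absurd hx hsinf
      · exact h
    · rintro ⟨⟨hsU, hsc⟩, hsQ⟩
      exact ⟨hsQ, fun h => hinfU (hsU h)⟩
  have e5 : Q.filter (fun s => inf ∈ s)
      = (U.filter (fun x => ∃ B ∈ Pi, x ∈ B ∧ B.card < w)).image (fun x => insert inf {x}) := by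
    ext s
    simp only [mem_filter, mem_image]
    constructor
    · rintro ⟨hsQ, hsinf⟩
      rw [mem_Qpart] at hsQ
      obtain ⟨⟨hsY, hsc⟩, B, hB, hcase⟩ := hsQ
      rcases hcase with hhat | ⟨htiny, -⟩
      swap
      · have := hnotiny B hB; omega
      have hBlt : B.card < w := by
        by_contra hge
        have : hatB inf w B = B := by unfold hatB; rw [if_neg hge]
        rw [this] at hhat
        exact (fun h => hinf ((hBX B hB) h)) (hhat hsinf)
      have hhat2 : hatB inf w B = insert inf B := by unfold hatB; rw [if_pos hBlt]
      obtain ⟨q, hqne, hqeq⟩ := pair_decomp hsinf hsc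
      have hqB : q ∈ B := by
        have hq1 : q ∈ s := by rw [hqeq]; exact mem_insert_of_mem (mem_singleton_self q)
        have : q ∈ hatB inf w B := hhat hq1
        rw [hhat2, mem_insert] at this
        rcases this with h | h
        · exact absurd h hqne
        · exact h
      refine ⟨q, ⟨(le_sup (f := id) hB : id B ≤ U) hqB, B, hB, hqB, hBlt⟩, ?_⟩
      rw [hqeq]
    · rintro ⟨x, ⟨hxU, B, hB, hxB, hBlt⟩, rfl⟩
      have hxinf : x ≠ inf := fun h => hinfU (h ▸ hxU)
      have hsc : (insert inf ({x} : Finset α)).card = 2 := by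
        rw [card_insert_of_notMem (by simp only [mem_singleton]; exact fun h => hxinf h.symm),
          card_singleton]
      have hhat2 : hatB inf w B = insert inf B := by unfold hatB; rw [if_pos hBlt]
      refine ⟨?_, mem_insert_self _ _⟩
      rw [mem_Qpart]
      refine ⟨⟨?_, hsc⟩, B, hB, Or.inl ?_⟩
      · intro y hy
        rcases mem_insert.mp hy with rfl | hy'
        · exact mem_insert_self _ _
        · rw [mem_singleton] at hy'
          exact hy' ▸ mem_insert_of_mem (hUX hxU)
      · rw [hhat2]
        intro y hy
        rcases mem_insert.mp hy with rfl | hy'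
        · exact mem_insert_self _ _
        · rw [mem_singleton] at hy'
          exact hy' ▸ mem_insert_of_mem hxB
  have e6 : (Q.filter (fun s => inf ∈ s)).card
      = ((U.filter (fun x => ∃ B ∈ Pi, x ∈ B ∧ B.card < w))).card := by
    rw [e5]
    apply card_image_of_injOn
    intro x hx y hy hxy
    have hxU : x ∈ U := (mem_filter.mp hx).1
    have hyU : y ∈ U := (mem_filter.mp hy).1
    have hxinf : x ≠ inf := fun h => hinfU (h ▸ hxU)
    have : x ∈ insert inf ({y} : Finset α) := by
      have h2 : ({inf, x} : Finset α) = {inf, y} := hxy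
      rw [show insert inf ({y} : Finset α) = {inf, y} from rfl, ← h2]
      exact mem_insert_of_mem (mem_singleton_self x)
    rcases mem_insert.mp this with h | h
    · exact absurd h hxinf
    · exact mem_singleton.mp h
  have e7 : ((U.powersetCard 2) ∩ Q).card + ((U.powersetCard 2) \ Q).card
      = (U.card).choose 2 := by
    rw [card_inter_add_card_sdiff, card_powersetCard]
  have e4' := congrArg card e4
  omega


lemma core_E1 (hinf : inf ∉ X) (hBX : ∀ B ∈ Pi, B ⊆ X)
    (hA : ∀ T ⊆ X, T.card = t → ∃ B ∈ Pi, Disjoint B T)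
    (hnotiny : ∀ B ∈ Pi, w ≤ B.card + 1) (hw3 : 3 ≤ w) (ht1 : 1 ≤ t)
    (hU : (Pi.sup id).card + 1 = w + t) :
    (∀ S ⊆ Pi.sup id, S.card = w - 1 → S ∈ Pi) ∧
      Qpart inf w (insert inf X) Pi = powersetCard 2 (insert inf (Pi.sup id)) ∧
      (Qpart inf w (insert inf X) Pi).card = (w + t).choose 2 := by
  set U := Pi.sup id with hUdef
  have hUX : U ⊆ X := sup_subset_X hBX
  have hinfU : inf ∉ U := fun h => hinf (hUX h)
  have hsub : ∀ S ⊆ U, S.card = w - 1 → S ∈ Pi := by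
    intro S hSU hSc
    have hTc : (U \ S).card = t := by
      rw [card_sdiff_of_subset hSU, hSc]; omega
    obtain ⟨B, hB, hBsub⟩ := window hBX hA sdiff_subset hTc
    have hBS : B ⊆ S := by
      intro x hx
      have := hBsub hx
      rw [mem_sdiff, mem_sdiff] at this
      by_contra hxS
      exact this.2 ⟨this.1, hxS⟩
    have : S = B := by
      apply (eq_of_subset_of_card_le hBS ?_).symm
      have := hnotiny B hB
      omega
    rwa [this]
  have hQ : Qpart inf w (insert inf X) Pi = powersetCard 2 (insert inf U) := by
    ext s
    rw [mem_Qpart, mem_powersetCard]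
    constructor
    · rintro ⟨⟨hsY, hsc⟩, B, hB, hcase⟩
      refine ⟨?_, hsc⟩
      rcases hcase with hhat | ⟨htiny, -⟩
      · exact hhat.trans (hatB_subset_insert.trans (insert_subset_insert _ (le_sup (f:=id) hB)))
      · have := hnotiny B hB; omega
    · rintro ⟨hsU, hsc⟩
      have hsY : s ⊆ insert inf X := hsU.trans (insert_subset_insert _ hUX)
      refine ⟨⟨hsY, hsc⟩, ?_⟩
      have hcards : (s \ {inf}).card ≤ w - 1 := by
        have : (s \ {inf}).card ≤ s.card := card_le_card sdiff_subset
        omega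
      have hsU' : s \ {inf} ⊆ U := by
        intro x hx
        rw [mem_sdiff, mem_singleton] at hx
        rcases mem_insert.mp (hsU hx.1) with h | h
        · exact absurd h hx.2
        · exact h
      obtain ⟨S, hS1, hS2, hS3⟩ := exists_subsuperset_card_eq hsU' hcards (by omega)
      refine ⟨S, hsub S hS2 hS3, Or.inl ?_⟩
      have : hatB inf w S = insert inf S := by
        unfold hatB; rw [if_pos (by omega)]
      rw [this]
      intro x hx
      rcases eq_or_ne x inf with rfl | hne
      · exact mem_insert_self _ _
      · exact mem_insert_of_mem (hS1 (mem_sdiff.mpr ⟨hx, by simpa using hne⟩))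
  refine ⟨hsub, hQ, ?_⟩
  rw [hQ, card_powersetCard, card_insert_of_notMem hinfU, hU]


lemma core_E2 (hinf : inf ∉ X) (hBX : ∀ B ∈ Pi, B ⊆ X)
    (hA : ∀ T ⊆ X, T.card = t → ∃ B ∈ Pi, Disjoint B T)
    (hallw : ∀ B ∈ Pi, B.card = w) (hw3 : 3 ≤ w)
    (hU : (Pi.sup id).card = w + t) :
    Pi = (Pi.sup id).powersetCard w ∧
      Qpart inf w (insert inf X) Pi = powersetCard 2 (Pi.sup id) ∧
      (Qpart inf w (insert inf X) Pi).card = (w + t).choose 2 := by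
  set U := Pi.sup id with hUdef
  have hUX : U ⊆ X := sup_subset_X hBX
  have hPsub : ∀ W ⊆ U, W.card = w → W ∈ Pi := by
    intro W hWU hWc
    have hTc : (U \ W).card = t := by rw [card_sdiff_of_subset hWU, hWc, hU]; omega
    obtain ⟨B, hB, hBsub⟩ := window hBX hA sdiff_subset hTc
    have hBW : B ⊆ W := by
      intro x hx
      have := hBsub hx
      rw [mem_sdiff, mem_sdiff] at this
      by_contra hxW
      exact this.2 ⟨this.1, hxW⟩
    have : W = B := (eq_of_subset_of_card_le hBW (by rw [hWc, hallw B hB])).symm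
    rwa [this]
  have hPeq : Pi = U.powersetCard w := by
    ext B
    rw [mem_powersetCard]
    exact ⟨fun hB => ⟨le_sup (f := id) hB, hallw B hB⟩, fun ⟨h1, h2⟩ => hPsub B h1 h2⟩
  have hQ : Qpart inf w (insert inf X) Pi = powersetCard 2 U := by
    ext s
    rw [mem_Qpart, mem_powersetCard]
    constructor
    · rintro ⟨⟨hsY, hsc⟩, B, hB, hcase⟩
      refine ⟨?_, hsc⟩
      rcases hcase with hhat | ⟨htiny, -⟩
      · have : hatB inf w B = B := by unfold hatB; rw [if_neg (by rw [hallw B hB]; omega)]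
        rw [this] at hhat
        exact hhat.trans (le_sup (f := id) hB)
      · have := hallw B hB; omega
    · rintro ⟨hsU, hsc⟩
      refine ⟨⟨hsU.trans (hUX.trans (subset_insert _ _)), hsc⟩, ?_⟩
      obtain ⟨W, hW1, hW2, hW3⟩ := exists_subsuperset_card_eq (n := w) hsU (by omega) (by omega)
      refine ⟨W, hPsub W hW2 hW3, Or.inl ?_⟩
      have : hatB inf w W = W := by unfold hatB; rw [if_neg (by omega)]
      rw [this]; exact hW1
  exact ⟨hPeq, hQ, by rw [hQ, card_powersetCard, hU]⟩


lemma core_SubB (hinf : inf ∉ X) (hBX : ∀ B ∈ Pi, B ⊆ X)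
    (hA : ∀ T ⊆ X, T.card = t → ∃ B ∈ Pi, Disjoint B T)
    (hnotiny : ∀ B ∈ Pi, w ≤ B.card + 1)
    (ht1 : 1 ≤ t) (htw : t + 4 ≤ w) (hw6 : 6 ≤ w)
    (hU : (Pi.sup id).card = w + t)
    (hex : ∃ B₁ ∈ Pi, B₁.card < w) :
    (w + t).choose 2 + 1 ≤ (Qpart inf w (insert inf X) Pi).card := by
  set U := Pi.sup id with hUdef
  set Q := Qpart inf w (insert inf X) Pi with hQdef
  set σs := U.filter (fun x => ∃ B ∈ Pi, x ∈ B ∧ B.card < w) with hσdef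
  set uncov := (U.powersetCard 2) \ Q with huncovdef
  have decomp := Qpart_card_decomp (Pi := Pi) hinf hBX hnotiny
  rw [← hUdef, ← hQdef, ← hσdef, ← huncovdef, hU] at decomp
  have uncov_le : uncov.card ≤ (w + t).choose 2 := by
    have := card_le_card (sdiff_subset : uncov ⊆ U.powersetCard 2)
    rwa [card_powersetCard, hU] at this
  -- key claim K1
  have K1 : ∀ s ∈ uncov, ∀ p ∈ U, p ∉ s → p ∈ σs := by
    intro s hs p hpU hps
    have hs' := mem_sdiff.mp hs
    have hsQ : s ∉ Q := hs'.2
    rw [mem_powersetCard] at hs'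
    obtain ⟨⟨hsU, hsc⟩, -⟩ := hs'
    have hips : (insert p s) ⊆ U := insert_subset hpU hsU
    have hipc : (insert p s).card = 3 := by rw [card_insert_of_notMem hps, hsc]
    have hcard : t ≤ (U \ insert p s).card := by
      rw [card_sdiff_of_subset hips, hipc, hU]; omega
    obtain ⟨T, hT, hTc⟩ := exists_subset_card_eq hcard
    obtain ⟨B, hB, hBsub⟩ := window hBX hA (hT.trans sdiff_subset) hTc
    have hnsB : ¬ s ⊆ B := fun h => hsQ (mem_Qpart_of_pair_subset_block hBX hB h hsc)
    obtain ⟨q, hqs, hqB⟩ := not_subset.mp hnsB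
    have hpT : p ∉ T := fun h => (mem_sdiff.mp (hT h)).2 (mem_insert_self _ _)
    have hqT : q ∉ T := fun h => (mem_sdiff.mp (hT h)).2 (mem_insert_of_mem hqs)
    have hpUT : p ∈ U \ T := mem_sdiff.mpr ⟨hpU, hpT⟩
    have hqUT : q ∈ U \ T := mem_sdiff.mpr ⟨hsU hqs, hqT⟩
    have hUTcard : (U \ T).card = w := by
      rw [card_sdiff_of_subset (hT.trans sdiff_subset), hTc, hU]; omega
    have hqiB : (insert q B).card = B.card + 1 := card_insert_of_notMem hqB
    have hiBsub : insert q B ⊆ U \ T := insert_subset hqUT hBsub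
    have hBlt : B.card < w := by
      have := card_le_card hiBsub
      rw [hqiB, hUTcard] at this
      omega
    have hpB : p ∈ B := by
      by_contra hpB
      have hpqB : p ∉ insert q B := by
        rw [mem_insert]
        push_neg
        exact ⟨fun h => hps (h ▸ hqs), hpB⟩
      have hsub2 : insert p (insert q B) ⊆ U \ T := insert_subset hpUT hiBsub
      have := card_le_card hsub2
      rw [card_insert_of_notMem hpqB, hqiB, hUTcard] at this
      have := hnotiny B hB
      omega
    rw [hσdef, mem_filter]
    exact ⟨hpU, B, hB, hpB, hBlt⟩
  -- key claim K2
  have K2 : ∀ s ∈ uncov, ∀ s' ∈ uncov, ¬ Disjoint s s' := by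
    intro s hs s' hs' hdisj
    have hsm := mem_sdiff.mp hs
    have hsm' := mem_sdiff.mp hs'
    have hsQ : s ∉ Q := hsm.2
    have hsQ' : s' ∉ Q := hsm'.2
    rw [mem_powersetCard] at hsm hsm'
    obtain ⟨⟨hsU, hsc⟩, -⟩ := hsm
    obtain ⟨⟨hsU', hsc'⟩, -⟩ := hsm'
    have huc : (s ∪ s').card = 4 := by
      rw [card_union_of_disjoint hdisj, hsc, hsc']
    have husub : s ∪ s' ⊆ U := union_subset hsU hsU'
    have hcard : t ≤ (U \ (s ∪ s')).card := by
      rw [card_sdiff_of_subset husub, huc, hU]; omega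
    obtain ⟨T, hT, hTc⟩ := exists_subset_card_eq hcard
    obtain ⟨B, hB, hBsub⟩ := window hBX hA (hT.trans sdiff_subset) hTc
    have hUTcard : (U \ T).card = w := by
      rw [card_sdiff_of_subset (hT.trans sdiff_subset), hTc, hU]; omega
    obtain ⟨q, hqs, hqB⟩ := not_subset.mp
      (fun h => hsQ (mem_Qpart_of_pair_subset_block hBX hB h hsc))
    obtain ⟨q', hqs', hqB'⟩ := not_subset.mp
      (fun h => hsQ' (mem_Qpart_of_pair_subset_block hBX hB h hsc'))
    have hqq' : q ≠ q' := fun h => (disjoint_left.mp hdisj) hqs (h ▸ hqs')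
    have hqT : q ∉ T := fun h => (mem_sdiff.mp (hT h)).2 (mem_union_left _ hqs)
    have hqT' : q' ∉ T := fun h => (mem_sdiff.mp (hT h)).2 (mem_union_right _ hqs')
    have hqUT : q ∈ U \ T := mem_sdiff.mpr ⟨hsU hqs, hqT⟩
    have hqUT' : q' ∈ U \ T := mem_sdiff.mpr ⟨hsU' hqs', hqT'⟩
    have hsub2 : insert q (insert q' B) ⊆ U \ T :=
      insert_subset hqUT (insert_subset hqUT' hBsub)
    have hqiB : (insert q' B).card = B.card + 1 := card_insert_of_notMem hqB'
    have hqiB2 : q ∉ insert q' B := by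
      rw [mem_insert]; push_neg; exact ⟨hqq', hqB⟩
    have := card_le_card hsub2
    rw [card_insert_of_notMem hqiB2, hqiB, hUTcard] at this
    have := hnotiny B hB
    omega
  -- final counting
  suffices h : uncov.card < σs.card by omega
  by_cases huncov : uncov = ∅
  · obtain ⟨B₁, hB₁, hB₁lt⟩ := hex
    have hB₁ne : B₁.Nonempty := card_pos.mp (by have := hnotiny B₁ hB₁; omega)
    obtain ⟨x, hx⟩ := hB₁ne
    have hxσ : x ∈ σs := mem_filter.mpr ⟨(le_sup (f := id) hB₁ : id B₁ ≤ U) hx, B₁, hB₁, hx, hB₁lt⟩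
    rw [huncov]
    simpa using card_pos.mpr ⟨x, hxσ⟩
  obtain ⟨s₀, hs₀⟩ := nonempty_iff_ne_empty.mpr huncov
  have hs₀U : s₀ ⊆ U := by
    have := (mem_powersetCard.mp (mem_sdiff.mp hs₀).1).1; exact this
  have hs₀c : s₀.card = 2 := (mem_powersetCard.mp (mem_sdiff.mp hs₀).1).2
  by_cases hsingle : ∀ u ∈ uncov, u = s₀
  · have huncov1 : uncov = {s₀} := by
      apply eq_singleton_iff_unique_mem.mpr ⟨hs₀, hsingle⟩
    have hσsub : U \ s₀ ⊆ σs := fun p hp =>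
      K1 s₀ hs₀ p (mem_sdiff.mp hp).1 (mem_sdiff.mp hp).2
    have hσcard : w + t - 2 ≤ σs.card := by
      have := card_le_card hσsub
      rwa [card_sdiff_of_subset hs₀U, hs₀c, hU] at this
    rw [huncov1, card_singleton]
    omega
  push_neg at hsingle
  obtain ⟨s', hs', hne⟩ := hsingle
  have hs'U : s' ⊆ U := (mem_powersetCard.mp (mem_sdiff.mp hs').1).1
  have hs'c : s'.card = 2 := (mem_powersetCard.mp (mem_sdiff.mp hs').1).2
  obtain ⟨z, hz⟩ := not_disjoint_iff.mp (K2 s' hs' s₀ hs₀)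
  have hzs' : z ∈ s' := hz.1
  have hzs₀ : z ∈ s₀ := hz.2
  have hzU : z ∈ U := hs₀U hzs₀
  have hinter : ∀ p, p ∈ s₀ → p ∈ s' → p = z := by
    intro p hp hp' 
    by_contra hpz
    have hsub : insert z {p} ⊆ s₀ ∩ s' :=
      insert_subset (mem_inter.mpr ⟨hzs₀, hzs'⟩)
        (singleton_subset_iff.mpr (mem_inter.mpr ⟨hp, hp'⟩))
    have hc2 : (insert z ({p} : Finset α)).card = 2 := by
      rw [card_insert_of_notMem (by simp only [mem_singleton]; exact fun h => hpz h.symm), card_singleton]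
    have h1 : s₀ ∩ s' = s₀ := by
      apply eq_of_subset_of_card_le inter_subset_left
      have := card_le_card hsub
      omega
    have h2 : s₀ ⊆ s' := h1 ▸ inter_subset_right
    exact hne ((eq_of_subset_of_card_le h2 (by omega)).symm)
  have hσsub : U.erase z ⊆ σs := by
    intro p hp
    obtain ⟨hpz, hpU⟩ := mem_erase.mp hp
    by_cases hp₀ : p ∈ s₀
    · have hp' : p ∉ s' := fun h => hpz (hinter p hp₀ h)
      exact K1 s' hs' p hpU hp'
    · exact K1 s₀ hs₀ p hpU hp₀
  have hσcard : w + t - 1 ≤ σs.card := by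
    have := card_le_card hσsub
    rwa [card_erase_of_mem hzU, hU] at this
  by_cases hzall : ∀ u ∈ uncov, z ∈ u
  · -- star case
    obtain ⟨Bz, hBz, hzBz⟩ := mem_sup.mp hzU
    have hclaim : uncov ⊆ (U \ Bz).image (fun q => insert z {q}) := by
      intro u hu
      have huU : u ⊆ U := (mem_powersetCard.mp (mem_sdiff.mp hu).1).1
      have huc : u.card = 2 := (mem_powersetCard.mp (mem_sdiff.mp hu).1).2
      have huQ : u ∉ Q := (mem_sdiff.mp hu).2
      obtain ⟨q, hqz, hqeq⟩ := pair_decomp (hzall u hu) huc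
      have hqu : q ∈ u := by rw [hqeq]; exact mem_insert_of_mem (mem_singleton_self q)
      have hqBz : q ∉ Bz := by
        intro hqBz
        apply huQ
        apply mem_Qpart_of_pair_subset_block hBX hBz ?_ huc
        rw [hqeq]
        exact insert_subset hzBz (singleton_subset_iff.mpr hqBz)
      rw [mem_image]
      exact ⟨q, mem_sdiff.mpr ⟨huU hqu, hqBz⟩, hqeq.symm⟩
    have hBzU : Bz ⊆ U := le_sup (f := id) hBz
    have hcard2 : uncov.card ≤ t + 1 := by
      have h1 := card_le_card hclaim
      have h2 := card_image_le (s := U \ Bz) (f := fun q => insert z ({q} : Finset α))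
      have h3 : (U \ Bz).card = (w + t) - Bz.card := by rw [card_sdiff_of_subset hBzU, hU]
      have := hnotiny Bz hBz
      omega
    omega
  · -- triangle case
    push_neg at hzall
    obtain ⟨s'', hs'', hzs''⟩ := hzall
    have hs''U : s'' ⊆ U := (mem_powersetCard.mp (mem_sdiff.mp hs'').1).1
    have hs''c : s''.card = 2 := (mem_powersetCard.mp (mem_sdiff.mp hs'').1).2
    obtain ⟨a, haz, haeq⟩ := pair_decomp hzs₀ hs₀c
    obtain ⟨a', haz', haeq'⟩ := pair_decomp hzs' hs'c
    have hane : a ≠ a' := by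
      intro h
      apply hne
      rw [haeq', haeq, h]
    -- membership extraction helper
    have hmema : ∀ u, u ∈ uncov → z ∉ u → a ∈ u ∧ a' ∈ u := by
      intro u hu hzu
      constructor
      · obtain ⟨d, hd⟩ := not_disjoint_iff.mp (K2 u hu s₀ hs₀)
        have : d ∈ s₀ := hd.2
        rw [haeq, mem_insert, mem_singleton] at this
        rcases this with rfl | rfl
        · exact absurd hd.1 hzu
        · exact hd.1
      · obtain ⟨d, hd⟩ := not_disjoint_iff.mp (K2 u hu s' hs')
        have : d ∈ s' := hd.2
        rw [haeq', mem_insert, mem_singleton] at this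
        rcases this with rfl | rfl
        · exact absurd hd.1 hzu
        · exact hd.1
    have haa'card : (insert a ({a'} : Finset α)).card = 2 := by
      rw [card_insert_of_notMem (by simp [hane]), card_singleton]
    have hnoz : ∀ u, u ∈ uncov → z ∉ u → u = insert a {a'} := by
      intro u hu hzu
      obtain ⟨hau, hau'⟩ := hmema u hu hzu
      have huc : u.card = 2 := (mem_powersetCard.mp (mem_sdiff.mp hu).1).2
      have hsubu : insert a ({a'} : Finset α) ⊆ u :=
        insert_subset hau (singleton_subset_iff.mpr hau')
      exact (eq_of_subset_of_card_le hsubu (by omega)).symm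
    have hclaim : uncov ⊆ ({s₀, s', insert a {a'}} : Finset (Finset α)) := by
      intro u hu
      simp only [mem_insert, mem_singleton]
      by_cases hzu : z ∈ u
      · have huc : u.card = 2 := (mem_powersetCard.mp (mem_sdiff.mp hu).1).2
        obtain ⟨c, hcz, hceq⟩ := pair_decomp hzu huc
        have hs''eq : s'' = insert a {a'} := hnoz s'' hs'' hzs''
        obtain ⟨d, hd⟩ := not_disjoint_iff.mp (K2 u hu s'' hs'')
        have hdu : d ∈ u := hd.1
        have hds'' : d ∈ s'' := hd.2
        have hdc : d = c := by
          rw [hceq, mem_insert, mem_singleton] at hdu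
          rcases hdu with rfl | rfl
          · exact absurd hds'' hzs''
          · rfl
        rw [hs''eq, mem_insert, mem_singleton] at hds''
        rcases hds'' with rfl | rfl
        · left; rw [hceq, ← hdc, haeq]
        · right; left; rw [hceq, ← hdc, haeq']
      · right; right; exact hnoz u hu hzu
    have hcard3 : uncov.card ≤ 3 := by
      refine le_trans (card_le_card hclaim) ?_
      refine le_trans (card_insert_le _ _) ?_
      refine Nat.succ_le_succ ?_
      refine le_trans (card_insert_le _ _) ?_
      simp
    omega


lemma core_big (hinf : inf ∉ X) (hBX : ∀ B ∈ Pi, B ⊆ X) (hBw : ∀ B ∈ Pi, B.card ≤ w)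
    (hA : ∀ T ⊆ X, T.card = t → ∃ B ∈ Pi, Disjoint B T)
    (hnotiny : ∀ B ∈ Pi, w ≤ B.card + 1)
    (ht1 : 1 ≤ t) (htw : t + 4 ≤ w) (hw : t ^ 2 + 2 * t + 2 < w)
    (hU : w + t + 1 ≤ (Pi.sup id).card) :
    (w + t).choose 2 + 1 ≤ (Qpart inf w (insert inf X) Pi).card := by
  set U := Pi.sup id with hUdef
  set Q := Qpart inf w (insert inf X) Pi with hQdef
  set Ψ : Finset α → ℕ := fun V => (Q ∩ powersetCard 2 (insert inf V)).card with hΨdef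
  have hUX : U ⊆ X := sup_subset_X hBX
  -- the one-block step
  have hstep : ∀ V B, V ⊆ U → B ∈ Pi → ¬ B ⊆ V →
      Ψ V + (w.choose 2 - (w - (B \ V).card).choose 2) ≤ Ψ (V ∪ B) := by
    intro V B hVU hB hnsub
    set A := hatB inf w B with hAdef
    set A₀ := A \ (B \ V) with hA₀def
    have hinfB : inf ∉ B := fun h => hinf (hBX B hB h)
    have hAcard : A.card = w := card_hatB hinfB (hnotiny B hB) (hBw B hB)
    have hBVA : B \ V ⊆ A := sdiff_subset.trans subset_hatB
    have hA₀card : A₀.card = w - (B \ V).card := by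
      rw [hA₀def, card_sdiff_of_subset hBVA, hAcard]
    set new := powersetCard 2 A \ powersetCard 2 A₀ with hnewdef
    have hnewcard : new.card = w.choose 2 - (w - (B \ V).card).choose 2 := by
      rw [hnewdef, card_sdiff_of_subset (powersetCard_mono sdiff_subset), card_powersetCard,
        card_powersetCard, hAcard, hA₀card]
    have hAiB : A ⊆ insert inf B := hatB_subset_insert
    have hnewQ : new ⊆ Q := by
      intro s hs
      obtain ⟨hs1, -⟩ := mem_sdiff.mp hs
      rw [mem_powersetCard] at hs1
      rw [hQdef, mem_Qpart]
      refine ⟨⟨hs1.1.trans (hAiB.trans (insert_subset_insert _ (hBX B hB))), hs1.2⟩,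
        B, hB, Or.inl hs1.1⟩
    have hnewP : new ⊆ powersetCard 2 (insert inf (V ∪ B)) := by
      intro s hs
      obtain ⟨hs1, -⟩ := mem_sdiff.mp hs
      rw [mem_powersetCard] at hs1 ⊢
      exact ⟨hs1.1.trans (hAiB.trans (insert_subset_insert _ subset_union_right)), hs1.2⟩
    have hdisj : Disjoint (Q ∩ powersetCard 2 (insert inf V)) new := by
      rw [disjoint_right]
      intro s hs hs'
      obtain ⟨hsA, hsA₀⟩ := mem_sdiff.mp hs
      rw [mem_powersetCard] at hsA
      have : ¬ s ⊆ A₀ := fun h => hsA₀ (mem_powersetCard.mpr ⟨h, hsA.2⟩)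
      obtain ⟨x, hxs, hxA₀⟩ := not_subset.mp this
      have hxBV : x ∈ B \ V := by
        have hxA : x ∈ A := hsA.1 hxs
        rw [hA₀def, mem_sdiff] at hxA₀
        push_neg at hxA₀
        exact hxA₀ hxA
      have hxV : x ∉ insert inf V := by
        rw [mem_insert]
        push_neg
        exact ⟨fun h => hinfB (h ▸ (mem_sdiff.mp hxBV).1), (mem_sdiff.mp hxBV).2⟩
      have := (mem_inter.mp hs').2
      rw [mem_powersetCard] at this
      exact hxV (this.1 hxs)
    rw [← hnewcard]
    calc Ψ V + new.card = ((Q ∩ powersetCard 2 (insert inf V)) ∪ new).card := by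
          rw [card_union_of_disjoint hdisj]
      _ ≤ Ψ (V ∪ B) := by
          apply card_le_card
          apply union_subset
          · exact inter_subset_inter Subset.rfl (powersetCard_mono
              (insert_subset_insert _ subset_union_left))
          · exact subset_inter hnewQ hnewP
  -- greedy induction
  have main : ∀ d V, V ⊆ U → (∃ B ∈ Pi, B ⊆ V) → (U \ V).card = d →
      Ψ V + (w.choose 2 - (w - d).choose 2) ≤ Ψ U := by
    intro d
    induction d using Nat.strong_induction_on with
    | _ d ih =>
      intro V hVU hbase hd
      rcases Nat.eq_zero_or_pos d with rfl | hdpos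
      · have hUV : U ⊆ V := sdiff_eq_empty_iff_subset.mp (card_eq_zero.mp hd)
        have : V = U := Subset.antisymm hVU hUV
        rw [this]
        simp
      · -- find a block not inside V
        obtain ⟨B, hB, hnsub⟩ : ∃ B ∈ Pi, ¬ B ⊆ V := by
          by_cases hVsmall : V.card + 2 ≤ w + t
          · obtain ⟨B₀, hB₀, hB₀V⟩ := hbase
            have htV : t ≤ V.card := by
              have := hnotiny B₀ hB₀
              have := card_le_card hB₀V
              omega
            obtain ⟨T, hT, hTc⟩ := exists_subset_card_eq htV
            obtain ⟨B, hB, hBsub⟩ := window hBX hA (hT.trans hVU) hTc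
            refine ⟨B, hB, fun hBV => ?_⟩
            have hBVT : B ⊆ V \ T := by
              intro x hx
              exact mem_sdiff.mpr ⟨hBV hx, (mem_sdiff.mp (hBsub hx)).2⟩
            have := card_le_card hBVT
            rw [card_sdiff_of_subset hT, hTc] at this
            have := hnotiny B hB
            omega
          · have : (U \ V).Nonempty := card_pos.mp (by omega)
            obtain ⟨x, hx⟩ := this
            obtain ⟨hxU, hxV⟩ := mem_sdiff.mp hx
            obtain ⟨B, hB, hxB⟩ := mem_sup.mp hxU
            exact ⟨B, hB, fun h => hxV (h hxB)⟩
        have hBU : B ⊆ U := le_sup (f := id) hB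
        set r := (B \ V).card with hrdef
        have hr1 : 1 ≤ r := by
          rw [hrdef]
          obtain ⟨x, hxs, hxV⟩ := not_subset.mp hnsub
          exact card_pos.mpr ⟨x, mem_sdiff.mpr ⟨hxs, hxV⟩⟩
        have hrd : r ≤ d := by
          rw [hrdef, ← hd]
          apply card_le_card
          intro x hx
          exact mem_sdiff.mpr ⟨hBU (mem_sdiff.mp hx).1, (mem_sdiff.mp hx).2⟩
        have hd' : (U \ (V ∪ B)).card = d - r := by
          have he : U \ (V ∪ B) = (U \ V) \ (B \ V) := by
            ext x
            simp only [mem_sdiff, mem_union]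
            tauto
          rw [he, card_sdiff_of_subset ?_, hd, hrdef]
          intro x hx
          exact mem_sdiff.mpr ⟨hBU (mem_sdiff.mp hx).1, (mem_sdiff.mp hx).2⟩
        have hih := ih (d - r) (by omega) (V ∪ B) (union_subset hVU hBU)
          ⟨B, hB, subset_union_right⟩ hd'
        have hst := hstep V B hVU hB hnsub
        rw [← hrdef] at hst
        have hsup := G_superadd w r (d - r)
        rw [show r + (d - r) = d by omega] at hsup
        omega
  -- base block
  have htX : t ≤ X.card := by
    have := card_le_card hUX
    omega
  obtain ⟨T₀, hT₀, hT₀c⟩ := exists_subset_card_eq htX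
  obtain ⟨B₁, hB₁, -⟩ := hA T₀ hT₀ hT₀c
  have hB₁U : B₁ ⊆ U := le_sup (f := id) hB₁
  have hbase : w.choose 2 ≤ Ψ B₁ := by
    have hinfB : inf ∉ B₁ := fun h => hinf (hBX B₁ hB₁ h)
    have hsub : powersetCard 2 (hatB inf w B₁) ⊆ Q ∩ powersetCard 2 (insert inf B₁) := by
      intro s hs
      rw [mem_powersetCard] at hs
      refine mem_inter.mpr ⟨?_, mem_powersetCard.mpr ⟨hs.1.trans hatB_subset_insert, hs.2⟩⟩
      rw [hQdef, mem_Qpart]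
      exact ⟨⟨hs.1.trans (hatB_subset_insert.trans (insert_subset_insert _ (hBX B₁ hB₁))), hs.2⟩,
        B₁, hB₁, Or.inl hs.1⟩
    have := card_le_card hsub
    rwa [card_powersetCard, card_hatB hinfB (hnotiny B₁ hB₁) (hBw B₁ hB₁)] at this
  have hd₁ : t + 1 ≤ (U \ B₁).card := by
    rw [card_sdiff_of_subset hB₁U]
    have := hBw B₁ hB₁
    omega
  have hmain := main ((U \ B₁).card) B₁ hB₁U ⟨B₁, hB₁, Subset.rfl⟩ rfl
  have hΨQ : Ψ U ≤ Q.card := card_le_card inter_subset_left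
  have hmono : (w - (U \ B₁).card).choose 2 ≤ (w - (t + 1)).choose 2 :=
    Nat.choose_le_choose 2 (by omega)
  have hcle : (w - (U \ B₁).card).choose 2 ≤ w.choose 2 := Nat.choose_le_choose 2 (by omega)
  have hcle2 : (w - (t+1)).choose 2 ≤ w.choose 2 := Nat.choose_le_choose 2 (by omega)
  -- final arithmetic
  have harith : (w + t).choose 2 + 1 + (w - (t + 1)).choose 2 ≤ 2 * w.choose 2 := by
    obtain ⟨q, hq⟩ : ∃ q, w - (t + 1) = q + 1 := ⟨w - t - 2, by omega⟩
    have hwq : w = q + t + 2 := by omega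
    have hmq : w + t = (q + 2 * t + 1) + 1 := by omega
    have hqbig : t * t + t + 1 ≤ q := by nlinarith
    rw [hq, hmq, show w = (q + t + 1) + 1 from by omega]
    have e1 := two_mul_choose_two_s5 (q + 2 * t + 1)
    have e2 := two_mul_choose_two_s5 (q + t + 1)
    have e3 := two_mul_choose_two_s5 q
    have key : (q + 2*t + 1 + 1) * (q + 2*t + 1) + 2 + (q + 1) * q
        ≤ 2 * ((q + t + 1 + 1) * (q + t + 1)) := by nlinarith
    omega
  omega


lemma core_tiny (hinf : inf ∉ X) (hBX : ∀ B ∈ Pi, B ⊆ X)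
    (ht1 : 1 ≤ t) (hw : t ^ 2 + 2 * t + 2 < w)
    (h4n : 5 * (w + t) ≤ 4 * X.card)
    {B₀ : Finset α} (hB₀ : B₀ ∈ Pi) (hB₀lo : w ≤ B₀.card + 3) (hB₀hi : B₀.card + 2 ≤ w) :
    (w + t).choose 2 + 1 ≤ (Qpart inf w (insert inf X) Pi).card := by
  set Y := insert inf X with hYdef
  set Q := Qpart inf w Y Pi with hQdef
  have hB₀X : B₀ ⊆ X := hBX B₀ hB₀
  have hB₀Y : B₀ ⊆ Y := hB₀X.trans (subset_insert _ _)
  have hYcard : Y.card = X.card + 1 := card_insert_of_notMem hinf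
  have hkX : B₀.card ≤ X.card := card_le_card hB₀X
  set touch := powersetCard 2 Y \ powersetCard 2 (Y \ B₀) with htouchdef
  have htQ : touch ⊆ Q := by
    intro s hs
    obtain ⟨hs1, hs2⟩ := mem_sdiff.mp hs
    rw [mem_powersetCard] at hs1
    have : ¬ s ⊆ Y \ B₀ := fun h => hs2 (mem_powersetCard.mpr ⟨h, hs1.2⟩)
    obtain ⟨x, hxs, hxd⟩ := not_subset.mp this
    have hxB₀ : x ∈ B₀ := by
      have hxY : x ∈ Y := hs1.1 hxs
      by_contra h
      exact hxd (mem_sdiff.mpr ⟨hxY, h⟩)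
    rw [hQdef, mem_Qpart]
    exact ⟨⟨hs1.1, hs1.2⟩, B₀, hB₀, Or.inr ⟨hB₀hi, not_disjoint_iff.mpr ⟨x, hxs, hxB₀⟩⟩⟩
  have hYB₀card : (Y \ B₀).card = X.card + 1 - B₀.card := by
    rw [card_sdiff_of_subset hB₀Y, hYcard]
  have htouchcard : touch.card = (X.card + 1).choose 2 - (X.card + 1 - B₀.card).choose 2 := by
    rw [htouchdef, card_sdiff_of_subset (powersetCard_mono sdiff_subset), card_powersetCard,
      card_powersetCard, hYcard, hYB₀card]
  have harith : (w + t).choose 2 + 1 + (X.card + 1 - B₀.card).choose 2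
      ≤ (X.card + 1).choose 2 := by
    set k := B₀.card with hkdef
    obtain ⟨j, hj⟩ : ∃ j, X.card + 1 - k = j + 1 := ⟨X.card - k, by omega⟩
    have hNX : X.card + 1 = (j + k) + 1 := by omega
    obtain ⟨m, hm⟩ : ∃ m, w + t = m + 1 := ⟨w + t - 1, by omega⟩
    rw [hj, hNX, hm]
    have e1 := two_mul_choose_two_s5 m
    have e2 := two_mul_choose_two_s5 j
    have e3 := two_mul_choose_two_s5 (j + k)
    have hk1 : w ≤ k + 3 := hB₀lo
    have hk2 : k + 2 ≤ w := hB₀hi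
    have h4n' : 5 * (m + 1) ≤ 4 * (j + k) := by omega
    have hkm : m ≤ k + t + 3 := by omega
    have hkm2 : k + t + 2 ≤ m + 1 := by omega
    have hwt : t * t + 2 * t + 3 ≤ w := by nlinarith
    have key : (m + 1) * m + 2 + (j + 1) * j ≤ (j + k + 1) * (j + k) := by
      nlinarith
    omega
  have := card_le_card htQ
  have h2 : (X.card + 1 - B₀.card).choose 2 ≤ (X.card + 1).choose 2 :=
    Nat.choose_le_choose 2 (by omega)
  omega



/-- The per-part trichotomy. -/
lemma core_part (hinf : inf ∉ X)
    (hBX : ∀ B ∈ Pi, B ⊆ X) (hBw : ∀ B ∈ Pi, B.card ≤ w)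
    (hA : ∀ T ⊆ X, T.card = t → ∃ B ∈ Pi, Disjoint B T)
    (hlow : ∀ B ∈ Pi, w ≤ B.card + 3)
    (ht1 : 1 ≤ t) (hw : t ^ 2 + 2 * t + 2 < w) (h4n : 5 * (w + t) ≤ 4 * X.card) :
    ((w + t).choose 2 + 1 ≤ (Qpart inf w (insert inf X) Pi).card) ∨
    ((Qpart inf w (insert inf X) Pi).card = (w + t).choose 2 ∧
      (∀ B ∈ Pi, B.card = w - 1 ∨ B.card = w) ∧
      ((((Pi.sup id).card = w + t - 1) ∧ (∀ S ⊆ Pi.sup id, S.card = w - 1 → S ∈ Pi) ∧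
        Qpart inf w (insert inf X) Pi = powersetCard 2 (insert inf (Pi.sup id))) ∨
       (((Pi.sup id).card = w + t) ∧ Pi = (Pi.sup id).powersetCard w ∧
        Qpart inf w (insert inf X) Pi = powersetCard 2 (Pi.sup id)))) := by
  have hw6 : 6 ≤ w := by nlinarith
  have htw : t + 4 ≤ w := by nlinarith
  have htX : t ≤ X.card := by omega
  by_cases htiny : ∃ B₀ ∈ Pi, B₀.card + 2 ≤ w
  · obtain ⟨B₀, hB₀, hB₀hi⟩ := htiny
    exact Or.inl (core_tiny hinf hBX ht1 hw h4n hB₀ (hlow B₀ hB₀) hB₀hi)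
  · push_neg at htiny
    have hnotiny : ∀ B ∈ Pi, w ≤ B.card + 1 := fun B hB => by
      have := htiny B hB; omega
    have hUlb := U_lb htX hBX hA hnotiny (by omega)
    by_cases hbig : w + t + 1 ≤ (Pi.sup id).card
    · exact Or.inl (core_big hinf hBX hBw hA hnotiny ht1 htw hw hbig)
    · rcases (by omega : (Pi.sup id).card + 1 = w + t ∨ (Pi.sup id).card = w + t) with hc | hc
      · obtain ⟨h1, h2, h3⟩ := core_E1 hinf hBX hA hnotiny (by omega) ht1 hc
        refine Or.inr ⟨h3, fun B hB => ?_, Or.inl ⟨by omega, h1, h2⟩⟩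
        have := hnotiny B hB
        have := hBw B hB
        omega
      · by_cases hex : ∃ B₁ ∈ Pi, B₁.card < w
        · exact Or.inl (core_SubB hinf hBX hA hnotiny ht1 htw hw6 hc hex)
        · push_neg at hex
          have hallw : ∀ B ∈ Pi, B.card = w := fun B hB =>
            le_antisymm (hBw B hB) (hex B hB)
          obtain ⟨h1, h2, h3⟩ := core_E2 hinf hBX hA hallw (by omega) hc
          exact Or.inr ⟨h3, fun B hB => Or.inr (hallw B hB), Or.inr ⟨hc, h1, h2⟩⟩

end LPECCAux


/-- A `(v,k,1)`-BIBD: `|Y| = v`, all blocks are `k`-subsets of `Y`, and every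
2-subset of `Y` lies in exactly one block. -/
def IsBIBD {α : Type*} [DecidableEq α] (v k : ℕ) (Y : Finset α)
    (D : Finset (Finset α)) : Prop :=
  Y.card = v ∧
  (∀ B ∈ D, B ⊆ Y ∧ B.card = k) ∧
  (∀ s ⊆ Y, s.card = 2 → ∃! B, B ∈ D ∧ s ⊆ B)

theorem lpecc_extremal_structure_BIBD {α : Type*} [DecidableEq α]
    (n t w b : ℕ) (ht : 1 ≤ t) (hw : t ^ 2 + 2 * t + 2 < w)
    (hdvd : (w + t).choose 2 ∣ (n + 1).choose 2)
    (X : Finset α) (P : Fin b → Finset (Finset α))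
    (hP : IsLPECC n t w (w - 2) X P)
    (hb : b = (n + 1).choose 2 / (w + t).choose 2) (hb1 : 1 < b)
    (inf : α) (hinf : inf ∉ X) :
    (∀ i, ∀ B ∈ P i, B.card = w - 1 ∨ B.card = w) ∧
    (w + t - 1) ∣ n ∧
    (∀ i, (((P i).sup id).card = w + t - 1 ∧
        ∀ S ⊆ (P i).sup id, S.card = w - 1 → S ∈ P i) ∨
      (((P i).sup id).card = w + t ∧ P i = ((P i).sup id).powersetCard w)) ∧
    IsBIBD (n + 1) (w + t) (insert inf X)
      (Finset.univ.image (fun i : Fin b =>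
        if ((P i).sup id).card = w + t - 1 then insert inf ((P i).sup id)
        else (P i).sup id)) := by
  obtain ⟨hXcard, hBXall, hPdisj, hAall, hBwall, hC⟩ := hP
  have hw6 : 6 ≤ w := by nlinarith
  have hm7 : 7 ≤ w + t := by omega
  have hbc : b * (w + t).choose 2 = (n + 1).choose 2 := by
    rw [hb]; exact Nat.div_mul_cancel hdvd
  have hcpos : 0 < (w + t).choose 2 := Nat.choose_pos (by omega)
  have h2c : 2 * (w + t).choose 2 ≤ (n + 1).choose 2 := by
    calc 2 * (w + t).choose 2 ≤ b * (w + t).choose 2 := Nat.mul_le_mul_right _ hb1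
      _ = (n + 1).choose 2 := hbc
  -- n is large : 5 (w+t) ≤ 4 n
  have h4n : 5 * (w + t) ≤ 4 * n := by
    by_contra hcon
    push_neg at hcon
    obtain ⟨m', hm'⟩ : ∃ m', w + t = m' + 1 := ⟨w + t - 1, by omega⟩
    have e1 := two_mul_choose_two_s5 m'
    have e2 := two_mul_choose_two_s5 n
    rw [hm'] at h2c hm7 hcon
    have h2c' : 2 * ((m' + 1) * m') ≤ (n + 1) * n := by omega
    nlinarith
  have htX : t ≤ X.card := by omega
  -- cross-family inequality
  have hcross : ∀ i j : Fin b, i ≠ j → ∀ B ∈ P i, ∀ B' ∈ P j,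
      2 * w + 2 * (B ∩ B').card ≤ B.card + B'.card + 3 := by
    intro i j hij B hB B' hB'
    have h1 := hC i j hij B hB B' hB'
    have h2 := card_symmDiff_eq B B'
    omega
  -- every block has at least w - 3 points
  have hlow : ∀ i : Fin b, ∀ B ∈ P i, w ≤ B.card + 3 := by
    intro i B hB
    haveI : Nontrivial (Fin b) := Fin.nontrivial_iff_two_le.mpr hb1
    obtain ⟨j, hj⟩ := exists_ne i
    obtain ⟨B', hB'⟩ := Pi_nonempty (Pi := P j) (by omega : t ≤ X.card)
      (fun T hT hTc => hAall T hT hTc j)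
    have := hcross j i hj B' hB' B hB
    have := hBwall j B' hB'
    omega
  set Y := insert inf X with hYdef
  set Q : Fin b → Finset (Finset α) := fun i => Qpart inf w Y (P i) with hQdef
  -- the pair families are disjoint
  have hQdisj : ∀ i j : Fin b, i ≠ j → Disjoint (Q i) (Q j) := by
    intro i j hij
    rw [disjoint_left]
    intro s hsi hsj
    rw [hQdef, mem_Qpart] at hsi hsj
    obtain ⟨⟨hsY, hsc⟩, B, hB, hcase⟩ := hsi
    obtain ⟨-, B', hB', hcase'⟩ := hsj
    have hcr := hcross i j hij B hB B' hB'
    have hBw := hBwall i B hB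
    have hBw' := hBwall j B' hB'
    have hgetB : ∀ x ∈ s, x ≠ inf → (s ⊆ hatB inf w B ∨ (B.card + 2 ≤ w ∧ ¬ Disjoint s B)) →
        False ∨ True := fun _ _ _ _ => Or.inr trivial
    -- helper : from the hat case, a non-inf point of s lies in the block
    have hmemB : ∀ (C : Finset α), C ⊆ X → s ⊆ hatB inf w C → ∀ x ∈ s, x ≠ inf → x ∈ C := by
      intro C hCX hsub x hxs hxinf
      have := hatB_subset_insert (hsub hxs)
      rcases mem_insert.mp this with h | h
      · exact absurd h hxinf
      · exact h
    rcases hcase with h1 | ⟨h1t, h1d⟩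
    · rcases hcase' with h2 | ⟨h2t, h2d⟩
      · -- both hat
        by_cases hsinf : inf ∈ s
        · have hBlt : B.card < w := by
            by_contra hge
            have : hatB inf w B = B := by unfold hatB; rw [if_neg hge]
            rw [this] at h1
            exact hinf (hBXall i B hB (h1 hsinf))
          have hBlt' : B'.card < w := by
            by_contra hge
            have : hatB inf w B' = B' := by unfold hatB; rw [if_neg hge]
            rw [this] at h2
            exact hinf (hBXall j B' hB' (h2 hsinf))
          obtain ⟨q, hqinf, hqeq⟩ := pair_decomp hsinf hsc
          have hqs : q ∈ s := by rw [hqeq]; exact mem_insert_of_mem (mem_singleton_self q)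
          have hq1 : q ∈ B := hmemB B (hBXall i B hB) h1 q hqs hqinf
          have hq2 : q ∈ B' := hmemB B' (hBXall j B' hB') h2 q hqs hqinf
          have : 0 < (B ∩ B').card := card_pos.mpr ⟨q, mem_inter.mpr ⟨hq1, hq2⟩⟩
          omega
        · have hs1 : s ⊆ B := fun x hx =>
            hmemB B (hBXall i B hB) h1 x hx (fun h => hsinf (h ▸ hx))
          have hs2 : s ⊆ B' := fun x hx =>
            hmemB B' (hBXall j B' hB') h2 x hx (fun h => hsinf (h ▸ hx))
          have : 2 ≤ (B ∩ B').card := by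
            rw [← hsc]
            exact card_le_card (fun x hx => mem_inter.mpr ⟨hs1 hx, hs2 hx⟩)
          omega
      · -- hat / tiny
        obtain ⟨x, hxs, hxB'⟩ := not_disjoint_iff.mp h2d
        have hxinf : x ≠ inf := fun h => hinf (hBXall j B' hB' (h ▸ hxB'))
        have hxB : x ∈ B := hmemB B (hBXall i B hB) h1 x hxs hxinf
        have : 0 < (B ∩ B').card := card_pos.mpr ⟨x, mem_inter.mpr ⟨hxB, hxB'⟩⟩
        omega
    · rcases hcase' with h2 | ⟨h2t, h2d⟩
      · -- tiny / hat
        obtain ⟨x, hxs, hxB⟩ := not_disjoint_iff.mp h1d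
        have hxinf : x ≠ inf := fun h => hinf (hBXall i B hB (h ▸ hxB))
        have hxB' : x ∈ B' := hmemB B' (hBXall j B' hB') h2 x hxs hxinf
        have : 0 < (B ∩ B').card := card_pos.mpr ⟨x, mem_inter.mpr ⟨hxB, hxB'⟩⟩
        omega
      · -- tiny / tiny
        omega
  -- per-part trichotomy
  have hcore := fun i : Fin b => core_part (Pi := P i) hinf (hBXall i) (hBwall i)
    (fun T hT hTc => hAall T hT hTc i) (hlow i) ht hw (by omega)
  simp only [← hYdef] at hcore
  -- summation
  have hQsubY : ∀ i, Q i ⊆ Y.powersetCard 2 := fun i => filter_subset _ _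
  have hbiu : (Finset.univ.biUnion Q).card = ∑ i, (Q i).card :=
    card_biUnion (fun i _ j _ hij => hQdisj i j hij)
  have hYcard : Y.card = n + 1 := by rw [hYdef, card_insert_of_notMem hinf, hXcard]
  have hpairsY : (Y.powersetCard 2).card = (n + 1).choose 2 := by
    rw [card_powersetCard, hYcard]
  have hsum_le : ∑ i, (Q i).card ≤ (n + 1).choose 2 := by
    rw [← hbiu, ← hpairsY]
    exact card_le_card (biUnion_subset.mpr (fun i _ => hQsubY i))
  have hgeC : ∀ i, (w + t).choose 2 ≤ (Q i).card := by
    intro i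
    rcases hcore i with h | h
    · simp only [hQdef]
      omega
    · exact le_of_eq h.1.symm
  have hallEq : ∀ i, (Q i).card = (w + t).choose 2 := by
    by_contra hcon
    push_neg at hcon
    obtain ⟨i₀, hi₀⟩ := hcon
    have hlt : ∑ _i : Fin b, (w + t).choose 2 < ∑ i, (Q i).card :=
      Finset.sum_lt_sum (fun i _ => hgeC i)
        ⟨i₀, mem_univ _, lt_of_le_of_ne (hgeC i₀) (Ne.symm hi₀)⟩
    rw [Finset.sum_const, Finset.card_univ, Fintype.card_fin, smul_eq_mul, hbc] at hlt
    omega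
  have hstruct := fun i : Fin b => (hcore i).resolve_left (by rw [hallEq i]; omega)
  -- coverage : the Q i partition all pairs of Y
  have hsumEq : ∑ i, (Q i).card = (n + 1).choose 2 := by
    calc ∑ i, (Q i).card = ∑ _i : Fin b, (w + t).choose 2 :=
          Finset.sum_congr rfl (fun i _ => hallEq i)
      _ = b * (w + t).choose 2 := by
          rw [Finset.sum_const, Finset.card_univ, Fintype.card_fin, smul_eq_mul]
      _ = (n + 1).choose 2 := hbc
  have hcover : Finset.univ.biUnion Q = Y.powersetCard 2 := by
    apply eq_of_subset_of_card_le (biUnion_subset.mpr (fun i _ => hQsubY i))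
    rw [hbiu, hpairsY, hsumEq]
  set D : Fin b → Finset α := fun i =>
    if ((P i).sup id).card = w + t - 1 then insert inf ((P i).sup id) else (P i).sup id
    with hDdef
  have hsupX : ∀ i, (P i).sup id ⊆ X := fun i => sup_subset_X (hBXall i)
  have hinfU : ∀ i, inf ∉ (P i).sup id := fun i h => hinf (hsupX i h)
  have hQD : ∀ i, Q i = powersetCard 2 (D i) := by
    intro i
    rcases hstruct i with ⟨-, -, hE⟩
    rcases hE with ⟨h1, -, h3⟩ | ⟨h1, -, h3⟩
    · simp only [hQdef, hDdef, if_pos h1]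
      exact h3
    · simp only [hQdef, hDdef, if_neg (show ¬ ((P i).sup id).card = w + t - 1 by omega)]
      exact h3
  have hDY : ∀ i, D i ⊆ Y := by
    intro i
    simp only [hDdef]
    split
    · exact insert_subset_insert _ (hsupX i)
    · exact (hsupX i).trans (subset_insert _ _)
  have hDcard : ∀ i, (D i).card = w + t := by
    intro i
    rcases hstruct i with ⟨-, -, hE⟩
    rcases hE with ⟨h1, -, -⟩ | ⟨h1, -, -⟩
    · simp only [hDdef, if_pos h1]
      rw [card_insert_of_notMem (hinfU i), h1]
      omega
    · simp only [hDdef, if_neg (show ¬ ((P i).sup id).card = w + t - 1 by omega)]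
      exact h1
  -- membership of pairs
  have hpairmem : ∀ s : Finset α, s ⊆ Y → s.card = 2 → ∃ i, s ∈ Q i := by
    intro s hsY hsc
    have : s ∈ Y.powersetCard 2 := mem_powersetCard.mpr ⟨hsY, hsc⟩
    rw [← hcover] at this
    obtain ⟨i, -, hi⟩ := mem_biUnion.mp this
    exact ⟨i, hi⟩
  -- (ii) divisibility
  have hdvd_out : (w + t - 1) ∣ n := by
    set E1s := Finset.univ.filter (fun i : Fin b => ((P i).sup id).card = w + t - 1)
      with hE1def
    have hpartition : X = E1s.biUnion (fun i => (P i).sup id) := by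
      apply Subset.antisymm
      · intro x hx
        have hxinf : x ≠ inf := fun h => hinf (h ▸ hx)
        have hsc : (insert inf ({x} : Finset α)).card = 2 := by
          rw [card_insert_of_notMem (notMem_singleton.mpr (Ne.symm hxinf)), card_singleton]
        have hsY : insert inf ({x} : Finset α) ⊆ Y := by
          rw [hYdef]
          exact insert_subset_insert _ (singleton_subset_iff.mpr hx)
        obtain ⟨i, hi⟩ := hpairmem _ hsY hsc
        rw [hQD i, mem_powersetCard] at hi
        have hinfD : inf ∈ D i := hi.1 (mem_insert_self _ _)
        have hxD : x ∈ D i := hi.1 (mem_insert_of_mem (mem_singleton_self x))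
        have hiE1 : ((P i).sup id).card = w + t - 1 := by
          by_contra hcon
          simp only [hDdef, if_neg hcon] at hinfD
          exact hinfU i hinfD
        refine mem_biUnion.mpr ⟨i, mem_filter.mpr ⟨mem_univ _, hiE1⟩, ?_⟩
        simp only [hDdef, if_pos hiE1] at hxD
        rcases mem_insert.mp hxD with h | h
        · exact absurd h hxinf
        · exact h
      · exact biUnion_subset.mpr (fun i _ => hsupX i)
    have hdisjE : ∀ i ∈ E1s, ∀ j ∈ E1s, i ≠ j →
        Disjoint ((P i).sup id) ((P j).sup id) := by
      intro i hi j hj hij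
      rw [disjoint_left]
      intro x hxi hxj
      have hxX : x ∈ X := hsupX i hxi
      have hxinf : x ≠ inf := fun h => hinf (h ▸ hxX)
      have hsc : (insert inf ({x} : Finset α)).card = 2 := by
        rw [card_insert_of_notMem (notMem_singleton.mpr (Ne.symm hxinf)), card_singleton]
      have hmem : ∀ k ∈ E1s, x ∈ (P k).sup id → insert inf ({x} : Finset α) ∈ Q k := by
        intro k hk hxk
        rw [hQD k, mem_powersetCard]
        refine ⟨?_, hsc⟩
        simp only [hDdef, if_pos (mem_filter.mp hk).2]
        exact insert_subset_insert _ (singleton_subset_iff.mpr hxk)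
      exact (disjoint_left.mp (hQdisj i j hij)) (hmem i hi hxi) (hmem j hj hxj)
    have hcardX : n = ∑ i ∈ E1s, ((P i).sup id).card := by
      rw [← hXcard, hpartition, card_biUnion hdisjE]
    have hsum : ∑ i ∈ E1s, ((P i).sup id).card = E1s.card * (w + t - 1) := by
      rw [Finset.sum_congr rfl (fun i hi => (mem_filter.mp hi).2), Finset.sum_const,
        smul_eq_mul]
    exact ⟨E1s.card, by rw [hcardX, hsum, Nat.mul_comm]⟩
  refine ⟨fun i => (hstruct i).2.1, hdvd_out, ?_, ?_⟩
  · intro i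
    rcases (hstruct i).2.2 with ⟨h1, h2, -⟩ | ⟨h1, h2, -⟩
    · exact Or.inl ⟨h1, h2⟩
    · exact Or.inr ⟨h1, h2⟩
  · refine ⟨hYcard, ?_, ?_⟩
    · intro Bl hBl
      obtain ⟨i, -, rfl⟩ := mem_image.mp hBl
      exact ⟨hDY i, hDcard i⟩
    · intro s hsY hsc
      obtain ⟨i, hi⟩ := hpairmem s hsY hsc
      have hsD : s ⊆ D i := by
        rw [hQD i, mem_powersetCard] at hi
        exact hi.1
      refine ⟨D i, ⟨mem_image_of_mem _ (mem_univ i), hsD⟩, ?_⟩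
      rintro B' ⟨hB'mem, hsB'⟩
      obtain ⟨j, -, rfl⟩ := mem_image.mp hB'mem
      rcases eq_or_ne j i with rfl | hji
      · rfl
      · exfalso
        have hsQj : s ∈ Q j := by
          rw [hQD j, mem_powersetCard]
          exact ⟨hsB', hsc⟩
        exact (disjoint_left.mp (hQdisj j i hji)) hsQj hi
end

section
/- Let t ≥ 1 and n ≥ 3(t+1) be integers. Then every (n, t, 3, 1)-LPECC code of size b satisfies b ≤ ⌊ n(n+1) / (6(t+1)) ⌋. -/
open Finset

section Aux

variable {α : Type*} [DecidableEq α]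

/-- "pair claims" of a block of size 2 or 3: all 2-subsets, plus the singletons
when the block has size 2. -/
def pclaim (B : Finset α) : Finset (Finset α) :=
  B.powerset.filter (fun S => S.card = 2 ∨ (S.card = 1 ∧ B.card = 2))

lemma mem_pclaim {B S : Finset α} :
    S ∈ pclaim B ↔ S ⊆ B ∧ (S.card = 2 ∨ (S.card = 1 ∧ B.card = 2)) := by
  simp [pclaim]

/-- claims of a general block of size ≤ 3. -/
def lclaim (X B : Finset α) : Finset (Finset α) :=
  if B.card ≤ 1 then X.image (fun y => insert y B) else pclaim B

lemma ne_of_mem_not_mem {s t : Finset α} {u : α} (h1 : u ∈ s) (h2 : u ∉ t) : s ≠ t :=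
  fun h => h2 (h ▸ h1)

lemma ne_of_card_ne' {s t : Finset α} (h : s.card ≠ t.card) : s ≠ t :=
  fun e => h (by rw [e])

lemma three_le_card {β : Type*} [DecidableEq β] {s : Finset β} {g1 g2 g3 : β}
    (h1 : g1 ∈ s) (h2 : g2 ∈ s) (h3 : g3 ∈ s)
    (d12 : g1 ≠ g2) (d13 : g1 ≠ g3) (d23 : g2 ≠ g3) : 3 ≤ s.card := by
  have hsub : ({g1, g2, g3} : Finset β) ⊆ s := by
    intro x hx
    simp only [mem_insert, mem_singleton] at hx
    rcases hx with rfl | rfl | rfl <;> assumption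
  have hcd : ({g1, g2, g3} : Finset β).card = 3 := by
    rw [card_insert_of_notMem (by simp [d12, d13]),
      card_insert_of_notMem (by simp [d23]), card_singleton]
  calc 3 = ({g1, g2, g3} : Finset β).card := hcd.symm
    _ ≤ s.card := card_le_card hsub

lemma exists_three_pclaim {B : Finset α} (h2 : 2 ≤ B.card) (h3 : B.card ≤ 3) :
    ∃ g1 g2 g3 : Finset α, g1 ∈ pclaim B ∧ g2 ∈ pclaim B ∧ g3 ∈ pclaim B ∧
      g1 ≠ g2 ∧ g1 ≠ g3 ∧ g2 ≠ g3 := by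
  have hcase : B.card = 2 ∨ B.card = 3 := by omega
  rcases hcase with hc | hc
  · obtain ⟨a, b, hab, rfl⟩ := card_eq_two.1 hc
    refine ⟨{a}, {b}, {a, b}, ?_, ?_, ?_, ?_, ?_, ?_⟩
    · exact mem_pclaim.2 ⟨by simp, Or.inr ⟨by simp, hc⟩⟩
    · exact mem_pclaim.2 ⟨by simp, Or.inr ⟨by simp, hc⟩⟩
    · exact mem_pclaim.2 ⟨by simp, Or.inl (card_pair hab)⟩
    · exact fun h => hab (by simpa using h)
    · exact ne_of_card_ne' (by rw [card_singleton, card_pair hab]; omega)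
    · exact ne_of_card_ne' (by rw [card_singleton, card_pair hab]; omega)
  · obtain ⟨a, b, c, hab, hac, hbc, rfl⟩ := card_eq_three.1 hc
    refine ⟨{a, b}, {a, c}, {b, c}, ?_, ?_, ?_, ?_, ?_, ?_⟩
    · exact mem_pclaim.2 ⟨by intro x hx; simp at hx; rcases hx with rfl | rfl <;> simp,
        Or.inl (card_pair hab)⟩
    · exact mem_pclaim.2 ⟨by intro x hx; simp at hx; rcases hx with rfl | rfl <;> simp,
        Or.inl (card_pair hac)⟩
    · exact mem_pclaim.2 ⟨by intro x hx; simp at hx; rcases hx with rfl | rfl <;> simp,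
        Or.inl (card_pair hbc)⟩
    · exact ne_of_mem_not_mem (show b ∈ ({a, b} : Finset α) by simp)
        (show b ∉ ({a, c} : Finset α) by simp [hab.symm, hbc])
    · exact ne_of_mem_not_mem (show a ∈ ({a, b} : Finset α) by simp)
        (show a ∉ ({b, c} : Finset α) by simp [hab, hac])
    · exact ne_of_mem_not_mem (show a ∈ ({a, c} : Finset α) by simp)
        (show a ∉ ({b, c} : Finset α) by simp [hab, hac])

/-- The key counting lemma: a family of blocks of sizes 2 and 3 that cannot be
covered by any set of at most `k` elements has at least `3(k+1)` pair-claims. -/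
lemma aux_cover_bound (k : ℕ) (Q : Finset (Finset α))
    (hsz : ∀ B ∈ Q, 2 ≤ B.card ∧ B.card ≤ 3)
    (hcov : ∀ S : Finset α, S.card ≤ k → ∃ B ∈ Q, Disjoint B S) :
    3 * (k + 1) ≤ (Q.biUnion pclaim).card := by
  induction k generalizing Q with
  | zero =>
    obtain ⟨B, hB, -⟩ := hcov ∅ (by simp)
    obtain ⟨g1, g2, g3, m1, m2, m3, d12, d13, d23⟩ :=
      exists_three_pclaim (hsz B hB).1 (hsz B hB).2
    have mm : ∀ g, g ∈ pclaim B → g ∈ Q.biUnion pclaim :=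
      fun g hg => mem_biUnion.2 ⟨B, hB, hg⟩
    simpa using three_le_card (mm _ m1) (mm _ m2) (mm _ m3) d12 d13 d23
  | succ k IH =>
    set C := Q.biUnion pclaim with hC
    have hnotin : ∀ (x : α) (g : Finset α), x ∈ g →
        g ∉ (Q.filter (fun B => x ∉ B)).biUnion pclaim := by
      intro x g hxg hg
      obtain ⟨B, hB, hgB⟩ := mem_biUnion.1 hg
      exact (mem_filter.1 hB).2 ((mem_pclaim.1 hgB).1 hxg)
    have main : ∃ (x : α) (g1 g2 g3 : Finset α),
        g1 ∈ C ∧ g2 ∈ C ∧ g3 ∈ C ∧ g1 ≠ g2 ∧ g1 ≠ g3 ∧ g2 ≠ g3 ∧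
        g1 ∉ (Q.filter (fun B => x ∉ B)).biUnion pclaim ∧
        g2 ∉ (Q.filter (fun B => x ∉ B)).biUnion pclaim ∧
        g3 ∉ (Q.filter (fun B => x ∉ B)).biUnion pclaim := by
      by_cases hA : ∃ (x : α) (g1 g2 g3 : Finset α),
          g1 ∈ C ∧ g2 ∈ C ∧ g3 ∈ C ∧ x ∈ g1 ∧ x ∈ g2 ∧ x ∈ g3 ∧
          g1 ≠ g2 ∧ g1 ≠ g3 ∧ g2 ≠ g3
      · obtain ⟨x, g1, g2, g3, m1, m2, m3, x1, x2, x3, d12, d13, d23⟩ := hA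
        exact ⟨x, g1, g2, g3, m1, m2, m3, d12, d13, d23,
          hnotin x g1 x1, hnotin x g2 x2, hnotin x g3 x3⟩
      · -- no point lies in three distinct claims
        obtain ⟨B, hB, -⟩ := hcov ∅ (by simp)
        have hmmC : ∀ g, g ∈ pclaim B → g ∈ C := fun g hg => mem_biUnion.2 ⟨B, hB, hg⟩
        have hcase : B.card = 2 ∨ B.card = 3 := by
          have := hsz B hB; omega
        rcases hcase with hc | hc
        · -- isolated-edge-ish case
          obtain ⟨a, b, hab, rfl⟩ := card_eq_two.1 hc
          have ma1 : ({a} : Finset α) ∈ C :=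
            hmmC _ (mem_pclaim.2 ⟨by simp, Or.inr ⟨by simp, hc⟩⟩)
          have mb1 : ({b} : Finset α) ∈ C :=
            hmmC _ (mem_pclaim.2 ⟨by simp, Or.inr ⟨by simp, hc⟩⟩)
          have mab : ({a, b} : Finset α) ∈ C :=
            hmmC _ (mem_pclaim.2 ⟨subset_rfl, Or.inl (card_pair hab)⟩)
          refine ⟨a, {a}, {a, b}, {b}, ma1, mab, mb1,
            ne_of_card_ne' (by rw [card_singleton, card_pair hab]; omega),
            fun h => hab (by simpa using h),
            ne_of_card_ne' (by rw [card_singleton, card_pair hab]; omega),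
            hnotin a _ (by simp), hnotin a _ (by simp), ?_⟩
          -- {b} is claimed only by {a,b} or other 2-blocks containing b
          intro hmem
          obtain ⟨B', hB'f, hgB'⟩ := mem_biUnion.1 hmem
          have hB'Q : B' ∈ Q := (mem_filter.1 hB'f).1
          have haB' : a ∉ B' := (mem_filter.1 hB'f).2
          obtain ⟨hsub', hcond'⟩ := mem_pclaim.1 hgB'
          have hbB' : b ∈ B' := hsub' (by simp)
          have hB'2 : B'.card = 2 := by
            rcases hcond' with h | ⟨_, h⟩
            · rw [card_singleton] at h; omega
            · exact h
          -- B' = {b, c}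
          have hec : (B'.erase b).card = 1 := by
            rw [card_erase_of_mem hbB', hB'2]
          obtain ⟨c, hc'⟩ := card_eq_one.1 hec
          have hcB' : c ∈ B'.erase b := hc' ▸ mem_singleton_self c
          have hcb : c ≠ b := (mem_erase.1 hcB').1
          have hcmem : c ∈ B' := (mem_erase.1 hcB').2
          have hB'eq : B' = {b, c} := by
            rw [← insert_erase hbB', hc']
          have hca : c ≠ a := fun h => haB' (h ▸ hcmem)
          -- contradiction with hA at the point b
          exact absurd ⟨b, {b}, {a, b}, {b, c},
            mb1, mab, mem_biUnion.2 ⟨B', hB'Q, mem_pclaim.2 ⟨hB'eq ▸ subset_rfl,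
              Or.inl (card_pair (Ne.symm hcb))⟩⟩,
            by simp, by simp, by simp,
            ne_of_card_ne' (by rw [card_singleton, card_pair hab]; omega),
            ne_of_card_ne' (by rw [card_singleton, card_pair (Ne.symm hcb)]; omega),
            ne_of_mem_not_mem (show a ∈ ({a, b} : Finset α) by simp)
              (show a ∉ ({b, c} : Finset α) by simp [hab, hca.symm])⟩ hA
        · -- isolated-triangle-ish case
          obtain ⟨a, b, c, hab, hac, hbc, rfl⟩ := card_eq_three.1 hc
          have hsab : ({a, b} : Finset α) ⊆ {a, b, c} := by
            intro x hx; simp at hx; rcases hx with rfl | rfl <;> simp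
          have hsac : ({a, c} : Finset α) ⊆ {a, b, c} := by
            intro x hx; simp at hx; rcases hx with rfl | rfl <;> simp
          have hsbc : ({b, c} : Finset α) ⊆ {a, b, c} := by
            intro x hx; simp at hx; rcases hx with rfl | rfl <;> simp
          have mab : ({a, b} : Finset α) ∈ C :=
            hmmC _ (mem_pclaim.2 ⟨hsab, Or.inl (card_pair hab)⟩)
          have mac : ({a, c} : Finset α) ∈ C :=
            hmmC _ (mem_pclaim.2 ⟨hsac, Or.inl (card_pair hac)⟩)
          have mbc : ({b, c} : Finset α) ∈ C :=
            hmmC _ (mem_pclaim.2 ⟨hsbc, Or.inl (card_pair hbc)⟩)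
          have dab_ac : ({a, b} : Finset α) ≠ {a, c} :=
            ne_of_mem_not_mem (show b ∈ ({a, b} : Finset α) by simp)
              (show b ∉ ({a, c} : Finset α) by simp [hab.symm, hbc])
          have dab_bc : ({a, b} : Finset α) ≠ {b, c} :=
            ne_of_mem_not_mem (show a ∈ ({a, b} : Finset α) by simp)
              (show a ∉ ({b, c} : Finset α) by simp [hab, hac])
          have dac_bc : ({a, c} : Finset α) ≠ {b, c} :=
            ne_of_mem_not_mem (show a ∈ ({a, c} : Finset α) by simp)
              (show a ∉ ({b, c} : Finset α) by simp [hab, hac])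
          refine ⟨a, {a, b}, {a, c}, {b, c}, mab, mac, mbc, dab_ac, dab_bc, dac_bc,
            hnotin a _ (by simp), hnotin a _ (by simp), ?_⟩
          intro hmem
          obtain ⟨B', hB'f, hgB'⟩ := mem_biUnion.1 hmem
          have hB'Q : B' ∈ Q := (mem_filter.1 hB'f).1
          have haB' : a ∉ B' := (mem_filter.1 hB'f).2
          obtain ⟨hsub', -⟩ := mem_pclaim.1 hgB'
          have hbB' : b ∈ B' := hsub' (by simp)
          have hcB' : c ∈ B' := hsub' (by simp)
          have hszB' := hsz B' hB'Q
          have hcase' : B'.card = 2 ∨ B'.card = 3 := by omega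
          rcases hcase' with hc2 | hc3
          · -- B' = {b, c}; then {b} ∈ pclaim B'
            have hB'eq : ({b, c} : Finset α) = B' :=
              eq_of_subset_of_card_le hsub' (by rw [card_pair hbc]; omega)
            have mb1 : ({b} : Finset α) ∈ C :=
              mem_biUnion.2 ⟨B', hB'Q, mem_pclaim.2 ⟨by rw [← hB'eq]; simp, Or.inr ⟨by simp, hc2⟩⟩⟩
            exact absurd ⟨b, {b}, {a, b}, {b, c}, mb1, mab, mbc,
              by simp, by simp, by simp,
              ne_of_card_ne' (by rw [card_singleton, card_pair hab]; omega),
              ne_of_card_ne' (by rw [card_singleton, card_pair hbc]; omega),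
              ne_of_mem_not_mem (mem_insert_self a {b}) (by simp [hab, hac])⟩ hA
          · -- B' has a third vertex d ∉ {a,b,c}
            have hsd : (B' \ {b, c}).card = 1 := by
              rw [card_sdiff_of_subset hsub', card_pair hbc, hc3]
            obtain ⟨d, hd⟩ := card_eq_one.1 hsd
            have hdmem : d ∈ B' \ {b, c} := hd ▸ mem_singleton_self d
            have hdB' : d ∈ B' := (mem_sdiff.1 hdmem).1
            have hdbc : d ∉ ({b, c} : Finset α) := (mem_sdiff.1 hdmem).2
            have hdb : d ≠ b := fun h => hdbc (by simp [h])
            have hdc : d ≠ c := fun h => hdbc (by simp [h])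
            have hda : d ≠ a := fun h => haB' (h ▸ hdB')
            have mbd : ({b, d} : Finset α) ∈ C := by
              refine mem_biUnion.2 ⟨B', hB'Q, mem_pclaim.2 ⟨?_, Or.inl (card_pair (Ne.symm hdb))⟩⟩
              intro x hx; simp at hx; rcases hx with rfl | rfl <;> assumption
            exact absurd ⟨b, {a, b}, {b, c}, {b, d}, mab, mbc, mbd,
              by simp, by simp, by simp,
              ne_of_mem_not_mem (show a ∈ ({a, b} : Finset α) by simp)
                (show a ∉ ({b, c} : Finset α) by simp [hab, hac]),
              ne_of_mem_not_mem (show a ∈ ({a, b} : Finset α) by simp)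
                (show a ∉ ({b, d} : Finset α) by simp [hab, hda.symm]),
              ne_of_mem_not_mem (show c ∈ ({b, c} : Finset α) by simp)
                (show c ∉ ({b, d} : Finset α) by simp [hbc.symm, hdc.symm])⟩ hA
    -- finish the induction step
    obtain ⟨x, g1, g2, g3, m1, m2, m3, d12, d13, d23, n1, n2, n3⟩ := main
    set Q' := Q.filter (fun B => x ∉ B) with hQ'
    have hcov' : ∀ S : Finset α, S.card ≤ k → ∃ B ∈ Q', Disjoint B S := by
      intro S hS
      obtain ⟨B, hB, hd⟩ := hcov (insert x S)
        (by have := card_insert_le x S; omega)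
      refine ⟨B, mem_filter.2 ⟨hB, fun hx =>
        disjoint_left.1 hd hx (mem_insert_self _ _)⟩,
        hd.mono_right (subset_insert _ _)⟩
    have IH' := IH Q' (fun B hB => hsz B (filter_subset _ _ hB)) hcov'
    have hsub : insert g1 (insert g2 (insert g3 (Q'.biUnion pclaim))) ⊆ C := by
      refine insert_subset m1 (insert_subset m2 (insert_subset m3 ?_))
      exact biUnion_subset_biUnion_of_subset_left _ (filter_subset _ _)
    have hcd : (insert g1 (insert g2 (insert g3 (Q'.biUnion pclaim)))).card
        = (Q'.biUnion pclaim).card + 3 := by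
      rw [card_insert_of_notMem (by simp [mem_insert, d12, d13, n1]),
        card_insert_of_notMem (by simp [mem_insert, d23, n2]),
        card_insert_of_notMem n3]
    have := card_le_card hsub
    omega

lemma cross_aux {X B B' S : Finset α} (hB'3 : B'.card ≤ 3)
    (hb : B.card ≤ 1) (hb' : ¬ B'.card ≤ 1)
    (h : S ∈ lclaim X B) (h' : S ∈ lclaim X B') : (symmDiff B B').card ≤ 2 := by
  rw [lclaim, if_pos hb] at h
  rw [lclaim, if_neg hb'] at h'
  obtain ⟨y, hy, rfl⟩ := mem_image.1 h
  obtain ⟨hsub, hcond⟩ := mem_pclaim.1 h'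
  have hBB' : B ⊆ B' := (subset_insert y B).trans hsub
  rw [symmDiff_of_le hBB', card_sdiff_of_subset hBB']
  rcases hcond with hcd | ⟨hcd, hB'2⟩
  · -- insert y B has two elements, so B.card ≥ 1
    have h1 : (insert y B).card ≤ B.card + 1 := card_insert_le y B
    omega
  · omega

lemma cross {X : Finset α} (B B' S : Finset α) (hB3 : B.card ≤ 3) (hB'3 : B'.card ≤ 3)
    (h : S ∈ lclaim X B) (h' : S ∈ lclaim X B') : (symmDiff B B').card ≤ 2 := by
  by_cases hb : B.card ≤ 1 <;> by_cases hb' : B'.card ≤ 1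
  · have hsub : symmDiff B B' ⊆ B ∪ B' := by
      intro z hz
      rw [mem_symmDiff] at hz
      rw [mem_union]
      tauto
    have := card_le_card hsub
    have := card_union_le B B'
    omega
  · exact cross_aux hB'3 hb hb' h h'
  · rw [symmDiff_comm]
    exact cross_aux hB3 hb' hb h' h
  · rw [lclaim, if_neg hb] at h
    rw [lclaim, if_neg hb'] at h'
    obtain ⟨hS, hcd⟩ := mem_pclaim.1 h
    obtain ⟨hS', hcd'⟩ := mem_pclaim.1 h'
    have h1 : symmDiff B B' ⊆ (B ∪ B') \ S := by
      intro z hz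
      rw [mem_symmDiff] at hz
      rw [mem_sdiff, mem_union]
      constructor
      · tauto
      · intro hzS
        have := hS hzS
        have := hS' hzS
        tauto
    have h2 : ((B ∪ B') \ S).card = (B ∪ B').card - S.card :=
      card_sdiff_of_subset (hS.trans subset_union_left)
    have h3 := card_union_add_card_inter B B'
    have h4 : S.card ≤ (B ∩ B').card := card_le_card (subset_inter hS hS')
    have h5 := card_le_card h1
    rcases hcd with h6 | ⟨h6, h7⟩ <;> rcases hcd' with h8 | ⟨h8, h9⟩ <;> omega

lemma small_block_card {X B : Finset α} (hb : B.card ≤ 1) :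
    (lclaim X B).card = X.card := by
  rw [lclaim, if_pos hb]
  apply card_image_of_injOn
  intro y hy y' hy' hEq0
  have hEq : insert y B = insert y' B := hEq0
  by_contra hne
  have hy1 : y ∈ insert y' B := by rw [← hEq]; exact mem_insert_self y B
  have hy2 : y' ∈ insert y B := by rw [hEq]; exact mem_insert_self y' B
  have hyB : y ∈ B := by
    rcases mem_insert.1 hy1 with h | h
    · exact absurd h hne
    · exact h
  have hy'B : y' ∈ B := by
    rcases mem_insert.1 hy2 with h | h
    · exact absurd h.symm hne
    · exact h
  have : 1 < B.card := one_lt_card.2 ⟨y, hyB, y', hy'B, hne⟩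
  omega

lemma family_bound (X : Finset α) (Q : Finset (Finset α)) (t : ℕ)
    (hQX : ∀ B ∈ Q, B ⊆ X) (hsz : ∀ B ∈ Q, B.card ≤ 3)
    (hn : 3 * (t + 1) ≤ X.card)
    (hcov : ∀ S : Finset α, S.card ≤ t → ∃ B ∈ Q, Disjoint B S) :
    3 * (t + 1) ≤ (Q.biUnion (lclaim X)).card := by
  by_cases hsmall : ∃ B ∈ Q, B.card ≤ 1
  · obtain ⟨B, hB, hb⟩ := hsmall
    have h1 := small_block_card (X := X) hb
    have h2 : lclaim X B ⊆ Q.biUnion (lclaim X) := subset_biUnion_of_mem _ hB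
    have := card_le_card h2
    omega
  · push_neg at hsmall
    have hEq : Q.biUnion (lclaim X) = Q.biUnion pclaim := by
      apply biUnion_congr rfl
      intro B hB
      rw [lclaim, if_neg (by have := hsmall B hB; omega)]
    rw [hEq]
    exact aux_cover_bound t Q (fun B hB => ⟨hsmall B hB, hsz B hB⟩) hcov

end Aux

theorem lpecc_upper_bound_w3_e1 {α : Type*} [DecidableEq α] (n t b : ℕ)
    (ht : 1 ≤ t) (hn : 3 * (t + 1) ≤ n)
    (X : Finset α) (P : Fin b → Finset (Finset α))
    (hP : IsLPECC n t 3 1 X P) :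
    b ≤ n * (n + 1) / (6 * (t + 1)) := by
  classical
  obtain ⟨hXcard, hsubX, hdisjP, hA, hw, hC⟩ := hP
  -- per-family cover property
  have hcov : ∀ i, ∀ S : Finset α, S.card ≤ t → ∃ B ∈ P i, Disjoint B S := by
    intro i S hS
    obtain ⟨T, hT1, hT2, hT3⟩ := Finset.exists_subsuperset_card_eq
      (show S ∩ X ⊆ X from inter_subset_right)
      (le_trans (card_le_card inter_subset_left) hS)
      (by omega : t ≤ X.card)
    obtain ⟨B, hB, hBT⟩ := hA T hT2 hT3 i
    refine ⟨B, hB, disjoint_left.2 fun a haB haS => ?_⟩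
    have haX : a ∈ X := hsubX i B hB haB
    exact disjoint_left.1 hBT haB (hT1 (mem_inter.2 ⟨haS, haX⟩))
  set Ci : Fin b → Finset (Finset α) := fun i => (P i).biUnion (lclaim X) with hCi
  have hlow : ∀ i, 3 * (t + 1) ≤ (Ci i).card := fun i =>
    family_bound X (P i) t (hsubX i) (hw i) (by omega) (hcov i)
  have hdis : ∀ i ∈ (univ : Finset (Fin b)), ∀ j ∈ (univ : Finset (Fin b)),
      i ≠ j → Disjoint (Ci i) (Ci j) := by
    intro i _ j _ hij
    rw [disjoint_left]
    intro S hSi hSj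
    obtain ⟨B, hB, hSB⟩ := mem_biUnion.1 hSi
    obtain ⟨B', hB', hSB'⟩ := mem_biUnion.1 hSj
    have h3 := hC i j hij B hB B' hB'
    have h2 := cross B B' S (hw i B hB) (hw j B' hB') hSB hSB'
    omega
  set pool : Finset (Finset α) :=
    X.powerset.filter (fun S => S.card = 1 ∨ S.card = 2) with hpooldef
  have hpool : ∀ i, Ci i ⊆ pool := by
    intro i S hS
    obtain ⟨B, hB, hSB⟩ := mem_biUnion.1 hS
    have hBX := hsubX i B hB
    rw [hpooldef, mem_filter, mem_powerset]
    rw [lclaim] at hSB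
    split_ifs at hSB with hb
    · obtain ⟨y, hy, rfl⟩ := mem_image.1 hSB
      have hc1 : 0 < (insert y B).card := card_pos.2 (insert_nonempty _ _)
      have hc2 : (insert y B).card ≤ B.card + 1 := card_insert_le _ _
      exact ⟨insert_subset hy hBX, by omega⟩
    · obtain ⟨hSB', hcond⟩ := mem_pclaim.1 hSB
      refine ⟨hSB'.trans hBX, ?_⟩
      rcases hcond with h | ⟨h, _⟩
      · exact Or.inr h
      · exact Or.inl h
  have hbig : (univ : Finset (Fin b)).biUnion Ci ⊆ pool :=
    biUnion_subset.2 fun i _ => hpool i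
  have hcard : ((univ : Finset (Fin b)).biUnion Ci).card = ∑ i, (Ci i).card :=
    card_biUnion hdis
  have hsum : b * (3 * (t + 1)) ≤ ∑ i, (Ci i).card := by
    calc b * (3 * (t + 1)) = ∑ _i : Fin b, 3 * (t + 1) := by
          rw [sum_const, card_univ, Fintype.card_fin, smul_eq_mul]
      _ ≤ ∑ i, (Ci i).card := sum_le_sum (fun i _ => hlow i)
  have hpoolcard : pool.card = n + n.choose 2 := by
    have hsplit : pool = X.powersetCard 1 ∪ X.powersetCard 2 := by
      ext S
      simp only [hpooldef, mem_filter, mem_powerset, mem_union, mem_powersetCard]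
      tauto
    have hdisj : Disjoint (X.powersetCard 1) (X.powersetCard 2) := by
      rw [disjoint_left]
      intro S h1 h2
      rw [mem_powersetCard] at h1 h2
      omega
    rw [hsplit, card_union_of_disjoint hdisj, card_powersetCard, card_powersetCard,
      hXcard, Nat.choose_one_right]
  have htotal : b * (3 * (t + 1)) ≤ n + n.choose 2 := by
    calc b * (3 * (t + 1)) ≤ ∑ i, (Ci i).card := hsum
      _ = ((univ : Finset (Fin b)).biUnion Ci).card := hcard.symm
      _ ≤ pool.card := card_le_card hbig
      _ = n + n.choose 2 := hpoolcard
  rw [Nat.choose_two_right] at htotal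
  rw [Nat.le_div_iff_mul_le (by positivity)]
  obtain ⟨m, rfl⟩ : ∃ m, n = m + 1 := ⟨n - 1, by omega⟩
  simp only [Nat.add_sub_cancel] at htotal
  have he : (m + 1) * m / 2 * 2 = (m + 1) * m := by
    apply Nat.div_mul_cancel
    have hev : Even ((m + 1) * m) := by
      rw [mul_comm]; exact Nat.even_mul_succ_self m
    exact hev.two_dvd
  calc b * (6 * (t + 1)) = b * (3 * (t + 1)) * 2 := by ring
    _ ≤ ((m + 1) + (m + 1) * m / 2) * 2 := Nat.mul_le_mul_right 2 htotal
    _ = (m + 1) * 2 + (m + 1) * m / 2 * 2 := by ring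
    _ = (m + 1) * 2 + (m + 1) * m := by rw [he]
    _ = (m + 1) * (m + 1 + 1) := by ring
end

section
/- Let v and m be positive integers with v > m, and let λ be the integer with 0 ≤ λ ≤ v − m − 1 and λ ≡ v (mod v − m). Then v + λ·binom(⌈v/(v−m)⌉, 2) + (v − m − λ)·binom(⌊v/(v−m)⌋, 2) ≥ 3m. -/
set_option maxHeartbeats 1000000

lemma two_mul_choose_two_s8 (n : ℕ) : 2 * Nat.choose n 2 + n = n * n := by
  induction n with
  | zero => rfl
  | succ k ih =>
    rw [Nat.choose_succ_succ, Nat.choose_one_right]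
    nlinarith [ih]

lemma consec_nonneg (a : ℤ) : 0 ≤ a * (a - 1) := by
  rcases le_or_gt a 0 with h | h
  · nlinarith
  · nlinarith

theorem turan_complement_estimate (v m lam : ℕ) (hm : 0 < m) (hvm : m < v)
    (hlam : lam ≤ v - m - 1) (hmod : lam % (v - m) = v % (v - m)) :
    3 * m ≤ v + lam * Nat.choose ((v + (v - m) - 1) / (v - m)) 2
      + (v - m - lam) * Nat.choose (v / (v - m)) 2 := by
  set d := v - m with hd_def
  have hd : 0 < d := by omega
  have hlam' : lam < d := by omega
  have hlam_eq : lam = v % d := by rw [← hmod, Nat.mod_eq_of_lt hlam']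
  have hv : d * (v / d) + v % d = v := Nat.div_add_mod v d
  set q := v / d with hq_def
  set r := v % d with hr_def
  have hrd : r < d := Nat.mod_lt _ hd
  have hq1 : 1 ≤ q := (Nat.one_le_div_iff hd).mpr (by omega)
  have h1 := two_mul_choose_two_s8 q
  have h2 := two_mul_choose_two_s8 (q + 1)
  have hm' : m + d = v := by omega
  subst hlam_eq
  rcases Nat.eq_zero_or_pos r with h0 | hpos
  · have hceil : (v + d - 1) / d = q := by
      have hrw : v + d - 1 = d * q + (d - 1) := by omega
      have e1 : (d - 1) / d = 0 := Nat.div_eq_of_lt (by omega)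
      rw [hrw, Nat.mul_add_div hd, e1]
      exact Nat.add_zero q
    rw [hceil, h0]
    set c0 := Nat.choose q 2 with hc0_def
    clear_value d q r c0
    simp only [Nat.zero_mul, Nat.sub_zero, Nat.add_zero]
    have key : (0:ℤ) ≤ ((q:ℤ) - 2) * ((q:ℤ) - 3) := by
      have := consec_nonneg ((q:ℤ) - 2)
      nlinarith
    zify at h1 h2 hv hm' ⊢
    nlinarith [mul_nonneg (by positivity : (0:ℤ) ≤ (d:ℤ)) key]
  · have hceil : (v + d - 1) / d = q + 1 := by
      have hdq : d * (q + 1) = d * q + d := by ring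
      have hrw : v + d - 1 = d * (q + 1) + (r - 1) := by omega
      have e1 : (r - 1) / d = 0 := Nat.div_eq_of_lt (by omega)
      rw [hrw, Nat.mul_add_div hd, e1]
    rw [hceil]
    set c0 := Nat.choose q 2 with hc0_def
    set c1 := Nat.choose (q + 1) 2 with hc1_def
    clear_value d q r c0 c1
    rcases Nat.lt_or_ge q 2 with hq2 | hq2
    · have hq1' : q = 1 := by omega
      subst hq1'
      have hc0 : c0 = 0 := hc0_def
      have hc1 : c1 = 1 := hc1_def
      subst hc0 hc1
      simp only [Nat.mul_zero, Nat.mul_one]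
      omega
    · have key : (0:ℤ) ≤ ((q:ℤ) - 2) * ((q:ℤ) - 3) := by
        have := consec_nonneg ((q:ℤ) - 2)
        nlinarith
      zify [hrd.le] at h1 h2 hv hm' hq2 ⊢
      nlinarith [mul_nonneg (by positivity : (0:ℤ) ≤ (d:ℤ)) key,
        mul_nonneg (by positivity : (0:ℤ) ≤ (r:ℤ)) (by linarith : (0:ℤ) ≤ (q:ℤ) - 2)]
end

section
/- Fix a positive integer t ≥ 1. Then C(n, t, 3, 1)/n² tends to 1/(6(t+1)) as n → ∞; that is, the sequence n ↦ C(n, t, 3, 1)/n² converges to 1/(6(t+1)). -/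
/-!
Upper bound: under Property C with `e = 1`, blocks of different families share no pair of
points, and blocks of size at most two of different families share no point. Property A forces
every family `F` to have `3 * (points of small blocks) + (pairs covered) ≥ 3 (t + 1)`: otherwise
those points together with a triangle transversal of the covered pairs (at most a third as many
vertices as pairs) fit in a `t`-set that meets every block. Summing over families gives
`6 (t + 1) b ≤ n² + O(n)`.

Lower bound: the `≈ n² / 6` three-element zero-sum subsets of `ℤ/n` pairwise share at most one
point and each point lies in at most `n` of them, so they can be greedily split into families of
`t + 1` pairwise disjoint triples with only `O(t n)` triples left over.
-/

open Finset

/-- `Cmax n t w e` is the maximum size of an `(n,t,w,e)`-LPECC code. -/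
noncomputable def Cmax (n t w e : ℕ) : ℕ :=
  sSup {b : ℕ | ∃ P : Fin b → Finset (Finset (Fin n)),
    IsLPECC n t w e Finset.univ P}

namespace Finset

variable {α : Type*}

lemma card_symmDiff_add_two_mul_card_inter [DecidableEq α] (s t : Finset α) :
    #(symmDiff s t) + 2 * #(s ∩ t) = #s + #t := by
  rw [symmDiff_eq_sup_sdiff_inf, sup_eq_union, inf_eq_inter,
    card_sdiff_of_subset inter_subset_union]
  have := card_union_add_card_inter s t
  have := card_le_card (inter_subset_union (s := s) (t := t))
  omega

lemma pair_right_injective [DecidableEq α] (x : α) :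
    Function.Injective fun y : α => ({x, y} : Finset α) := by
  intro y z (h : ({x, y} : Finset α) = {x, z})
  have hy : y ∈ ({x, z} : Finset α) := h ▸ by simp
  have hz : z ∈ ({x, y} : Finset α) := h ▸ by simp
  simp only [mem_insert, mem_singleton] at hy hz
  grind

lemma two_mul_card_powersetCard_two_le (s : Finset α) :
    2 * #(s.powersetCard 2) ≤ #s ^ 2 := by
  rw [card_powersetCard, Nat.choose_two_right, sq]
  calc 2 * (#s * (#s - 1) / 2) ≤ #s * (#s - 1) := Nat.mul_div_le _ 2
    _ ≤ #s * #s := Nat.mul_le_mul_left _ (Nat.sub_le _ 1)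

end Finset

section TriangleTransversal

variable {α : Type*} [DecidableEq α] {E : Finset (Finset α)} {B B' : Finset α}

def IsTriangle (E : Finset (Finset α)) (B : Finset α) : Prop :=
  #B = 3 ∧ B.powersetCard 2 ⊆ E

lemma IsTriangle.image_pair_subset_filter_mem (hB : IsTriangle E B) {x : α} (hx : x ∈ B) :
    (B.erase x).image (fun y => ({x, y} : Finset α)) ⊆ {e ∈ E | x ∈ e} := by
  intro e he
  obtain ⟨y, hy, rfl⟩ := mem_image.mp he
  obtain ⟨hyx, hyB⟩ := mem_erase.mp hy
  refine mem_filter.mpr ⟨hB.2 (mem_powersetCard.mpr ⟨?_, card_pair hyx.symm⟩), mem_insert_self _ _⟩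
  exact insert_subset hx (singleton_subset_iff.mpr hyB)

lemma IsTriangle.card_image_pair (hB : IsTriangle E B) {x : α} (hx : x ∈ B) :
    #((B.erase x).image (fun y => ({x, y} : Finset α))) = 2 := by
  rw [card_image_of_injective _ (pair_right_injective x), card_erase_of_mem hx, hB.1]

lemma IsTriangle.eq_of_mem_of_card_filter_mem_le_two (hB : IsTriangle E B) (hB' : IsTriangle E B')
    {x : α} (hxB : x ∈ B) (hxB' : x ∈ B') (hx : #{e ∈ E | x ∈ e} ≤ 2) : B = B' := by
  have hstar : ∀ {C : Finset α}, IsTriangle E C → x ∈ C →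
      (C.erase x).image (fun y => ({x, y} : Finset α)) = {e ∈ E | x ∈ e} := fun hC hxC =>
    eq_of_subset_of_card_le (hC.image_pair_subset_filter_mem hxC)
      (hx.trans (hC.card_image_pair hxC).ge)
  have := image_injective (pair_right_injective x) ((hstar hB hxB).trans (hstar hB' hxB').symm)
  rw [← insert_erase hxB, ← insert_erase hxB', this]

lemma IsTriangle.filter_notMem (hB : IsTriangle E B) {v : α} (hv : v ∉ B) :
    IsTriangle {e ∈ E | v ∉ e} B :=
  ⟨hB.1, fun _ hp => mem_filter.mpr ⟨hB.2 hp, fun hvp => hv ((mem_powersetCard.mp hp).1 hvp)⟩⟩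

lemma IsTriangle.sdiff_powersetCard (hB : IsTriangle E B) {C : Finset α} (hBC : Disjoint B C) :
    IsTriangle (E \ C.powersetCard 2) B := by
  refine ⟨hB.1, fun p hp => mem_sdiff.mpr ⟨hB.2 hp, fun hpC => ?_⟩⟩
  obtain ⟨hpB, hp2⟩ := mem_powersetCard.mp hp
  obtain ⟨y, hy⟩ := card_pos.mp (by omega : 0 < #p)
  exact disjoint_left.mp hBC (hpB hy) ((mem_powersetCard.mp hpC).1 hy)

/-- Remove a vertex of degree at least three, or else a triangle, which is then a whole
connected component; either way three edges go per vertex taken. -/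
lemma exists_triangle_transversal (E : Finset (Finset α)) :
    ∃ D : Finset α, 3 * #D ≤ #E ∧ ∀ B, IsTriangle E B → ¬Disjoint D B := by
  induction E using Finset.strongInduction with
  | H E ih =>
  by_cases hdeg : ∃ v, 3 ≤ #{e ∈ E | v ∈ e}
  · obtain ⟨v, hv⟩ := hdeg
    obtain ⟨D, hD, hDB⟩ := ih {e ∈ E | v ∉ e} (filter_ssubset.mpr (by
      obtain ⟨e, he⟩ := card_pos.mp (by omega : 0 < #{e ∈ E | v ∈ e})
      exact ⟨e, (mem_filter.mp he).1, not_not.mpr (mem_filter.mp he).2⟩))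
    refine ⟨insert v D, ?_, fun B hB hvDB => ?_⟩
    · have := card_filter_add_card_filter_not (s := E) (p := (v ∈ ·))
      have := card_insert_le v D
      omega
    · have hvB : v ∉ B := disjoint_left.mp hvDB (mem_insert_self v D)
      exact hDB B (hB.filter_notMem hvB) (hvDB.mono_left (subset_insert v D))
  push Not at hdeg
  by_cases htri : ∃ B, IsTriangle E B
  · obtain ⟨B, hB⟩ := htri
    obtain ⟨v, hv⟩ := card_pos.mp (by rw [hB.1]; omega : 0 < #B)
    have hpairs : (B.powersetCard 2).Nonempty := powersetCard_nonempty.mpr (by rw [hB.1]; omega)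
    obtain ⟨D, hD, hDB⟩ := ih _ (sdiff_ssubset hB.2 hpairs)
    refine ⟨insert v D, ?_, fun B' hB' hvDB' => ?_⟩
    · have h3 : #(B.powersetCard 2) = 3 := by rw [card_powersetCard, hB.1]; rfl
      have := card_sdiff_add_card_eq_card hB.2
      have := card_insert_le v D
      omega
    · by_cases hBB' : Disjoint B' B
      · exact hDB B' (hB'.sdiff_powersetCard hBB') (hvDB'.mono_left (subset_insert v D))
      · obtain ⟨x, hxB', hxB⟩ := not_disjoint_iff.mp hBB'
        have := hB.eq_of_mem_of_card_filter_mem_le_two hB' hxB hxB' (Nat.le_of_lt_succ (hdeg x))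
        exact disjoint_left.mp hvDB' (mem_insert_self v D) (this ▸ hv)
  · exact ⟨∅, by simp, fun B hB _ => htri ⟨B, hB⟩⟩

end TriangleTransversal

section CodeUpperBound

variable {α : Type*} [DecidableEq α]

def coveredPairs (F : Finset (Finset α)) : Finset (Finset α) :=
  F.biUnion (·.powersetCard 2)

def smallBlockVertices (F : Finset (Finset α)) : Finset α :=
  {B ∈ F | #B ≤ 2}.biUnion id

lemma disjoint_coveredPairs {F G : Finset (Finset α)} (hF : ∀ B ∈ F, #B ≤ 3)
    (hG : ∀ B ∈ G, #B ≤ 3) (hFG : ∀ B ∈ F, ∀ B' ∈ G, 3 ≤ #(symmDiff B B')) :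
    Disjoint (coveredPairs F) (coveredPairs G) := by
  simp only [coveredPairs, disjoint_biUnion_left, disjoint_biUnion_right]
  intro B' hB' B hB
  refine disjoint_left.mpr fun p hp hp' => ?_
  rw [mem_powersetCard] at hp hp'
  have := card_le_card (subset_inter hp.1 hp'.1)
  have := card_symmDiff_add_two_mul_card_inter B B'
  have := hF B hB
  have := hG B' hB'
  have := hFG B hB B' hB'
  omega

lemma disjoint_smallBlockVertices {F G : Finset (Finset α)}
    (hFG : ∀ B ∈ F, ∀ B' ∈ G, 3 ≤ #(symmDiff B B')) :
    Disjoint (smallBlockVertices F) (smallBlockVertices G) := by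
  simp only [smallBlockVertices, disjoint_biUnion_left, disjoint_biUnion_right, mem_filter, id]
  intro B' ⟨hB', hB'2⟩ B ⟨hB, hB2⟩
  refine disjoint_left.mpr fun x hx hx' => ?_
  have := card_pos.mpr ⟨x, mem_inter.mpr ⟨hx, hx'⟩⟩
  have := card_symmDiff_add_two_mul_card_inter B B'
  have := hFG B hB B' hB'
  omega

lemma three_mul_succ_le_card_smallBlockVertices_add_card_coveredPairs [Fintype α] {t : ℕ}
    (ht : t ≤ Fintype.card α) {F : Finset (Finset α)} (hF : ∀ B ∈ F, #B ≤ 3) (hF₀ : ∅ ∉ F)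
    (hA : ∀ T : Finset α, #T = t → ∃ B ∈ F, Disjoint B T) :
    3 * (t + 1) ≤ 3 * #(smallBlockVertices F) + #(coveredPairs F) := by
  obtain ⟨D, hD, hDB⟩ := exists_triangle_transversal (coveredPairs F)
  by_contra! h
  obtain ⟨T, hVDT, hT⟩ := exists_superset_card_eq (s := smallBlockVertices F ∪ D) (n := t)
    (by have := card_union_le (smallBlockVertices F) D; omega) ht
  obtain ⟨B, hB, hBT⟩ := hA T hT
  suffices ¬Disjoint (smallBlockVertices F ∪ D) B from this (hBT.symm.mono_left hVDT)
  obtain ⟨x, hx⟩ := nonempty_iff_ne_empty.mpr (ne_of_mem_of_not_mem hB hF₀)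
  rcases le_or_gt #B 2 with hB2 | hB3
  · refine not_disjoint_iff.mpr ⟨x, mem_union_left _ ?_, hx⟩
    exact mem_biUnion.mpr ⟨B, mem_filter.mpr ⟨hB, hB2⟩, hx⟩
  · have hBtri : IsTriangle (coveredPairs F) B :=
      ⟨by have := hF B hB; omega, subset_biUnion_of_mem (·.powersetCard 2) hB⟩
    exact fun hdisj => hDB B hBtri (hdisj.mono_left subset_union_right)

lemma IsLPECC.six_mul_succ_mul_le [Fintype α] {n t b : ℕ} {P : Fin b → Finset (Finset α)}
    (hP : IsLPECC n t 3 1 univ P) (ht : t ≤ n) :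
    6 * (t + 1) * b ≤ n ^ 2 + 6 * n + 6 * (t + 1) := by
  obtain ⟨hX, -, -, hA, hB, hC⟩ := hP
  have hn : Fintype.card α = n := by rw [← hX, card_univ]
  set Z : Finset (Fin b) := {i | ∅ ∈ P i}
  have hZ : #Z ≤ 1 := card_le_one.mpr fun i hi j hj => by
    by_contra hij
    simpa using hC i j hij ∅ (mem_filter.mp hi).2 ∅ (mem_filter.mp hj).2
  have hb : b ≤ #(univ \ Z) + 1 := by
    have := card_le_card_sdiff_add_card (s := univ) (t := Z)
    rw [card_univ, Fintype.card_fin] at this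
    omega
  have hfam : ∀ i ∈ univ \ Z, 3 * (t + 1) ≤
      3 * #(smallBlockVertices (P i)) + #(coveredPairs (P i)) := fun i hi =>
    three_mul_succ_le_card_smallBlockVertices_add_card_coveredPairs (hn ▸ ht) (hB i)
      (by simpa [Z] using hi) fun T hT => hA T (subset_univ T) hT i
  have hV : ∑ i, #(smallBlockVertices (P i)) ≤ n := by
    rw [← card_biUnion fun i _ j _ hij => disjoint_smallBlockVertices (hC i j hij), ← hn]
    exact card_le_univ _
  have hQ : 2 * ∑ i, #(coveredPairs (P i)) ≤ n ^ 2 := by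
    rw [← card_biUnion fun i _ j _ hij => disjoint_coveredPairs (hB i) (hB j) (hC i j hij), ← hn,
      ← card_univ]
    refine (Nat.mul_le_mul_left 2 (card_le_card ?_)).trans (two_mul_card_powersetCard_two_le _)
    exact biUnion_subset.mpr fun i _ => biUnion_subset.mpr fun B _ =>
      powersetCard_mono (subset_univ B)
  calc 6 * (t + 1) * b ≤ 6 * (t + 1) * (#(univ \ Z) + 1) := by gcongr
    _ = 2 * ∑ _i ∈ univ \ Z, 3 * (t + 1) + 6 * (t + 1) := by rw [sum_const, smul_eq_mul]; ring
    _ ≤ 2 * ∑ i ∈ univ \ Z, (3 * #(smallBlockVertices (P i)) + #(coveredPairs (P i)))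
        + 6 * (t + 1) := by gcongr with i hi; exact hfam i hi
    _ ≤ 2 * ∑ i, (3 * #(smallBlockVertices (P i)) + #(coveredPairs (P i))) + 6 * (t + 1) := by
        gcongr; exact subset_univ _
    _ = 6 * ∑ i, #(smallBlockVertices (P i)) + 2 * ∑ i, #(coveredPairs (P i)) + 6 * (t + 1) := by
        rw [sum_add_distrib, ← mul_sum]; ring
    _ ≤ n ^ 2 + 6 * n + 6 * (t + 1) := by omega

end CodeUpperBound

section Packing

variable {α : Type*} [DecidableEq α]

lemma exists_disjoint_of_pairwiseDisjoint {𝒢 : Finset (Finset α)}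
    (h𝒢 : (𝒢 : Set (Finset α)).PairwiseDisjoint id) {T : Finset α} (hT : #T < #𝒢) :
    ∃ B ∈ 𝒢, Disjoint B T := by
  by_contra! h
  refine hT.not_ge (card_le_card_of_forall_subsingleton (fun B x => x ∈ B)
    (fun B hB => ?_) fun x _ B ⟨hB, hxB⟩ B' ⟨hB', hxB'⟩ => h𝒢.elim_finset hB hB' x hxB hxB')
  obtain ⟨x, hxB, hxT⟩ := not_disjoint_iff.mp (h B hB)
  exact ⟨x, hxT, hxB⟩

/-- A maximal matching, built greedily: each chosen block meets at most `k * D` blocks. -/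
lemma exists_pairwiseDisjoint_subset_card_le_mul (𝒯 : Finset (Finset α)) {k D : ℕ}
    (h₀ : ∅ ∉ 𝒯) (hk : ∀ B ∈ 𝒯, #B ≤ k) (hD : ∀ x, #{B ∈ 𝒯 | x ∈ B} ≤ D) :
    ∃ M ⊆ 𝒯, (M : Set (Finset α)).PairwiseDisjoint id ∧ #𝒯 ≤ k * D * #M := by
  induction 𝒯 using Finset.strongInduction with
  | H 𝒯 ih =>
  obtain rfl | ⟨B, hB⟩ := 𝒯.eq_empty_or_nonempty
  · exact ⟨∅, subset_refl _, by simp, by simp⟩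
  have hBne : B ≠ ∅ := ne_of_mem_of_not_mem hB h₀
  have hssub : {C ∈ 𝒯 | Disjoint C B} ⊂ 𝒯 :=
    filter_ssubset.mpr ⟨B, hB, by rwa [disjoint_self_iff_empty]⟩
  obtain ⟨M, hM𝒯, hM, hcard⟩ := ih _ hssub (fun h => h₀ (mem_filter.mp h).1)
    (fun C hC => hk C (mem_filter.mp hC).1)
    (fun x => (card_le_card (filter_subset_filter _ (filter_subset _ _))).trans (hD x))
  have hBM : B ∉ M := fun h => hBne (disjoint_self_iff_empty B |>.mp (mem_filter.mp (hM𝒯 h)).2)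
  refine ⟨insert B M, insert_subset hB (hM𝒯.trans (filter_subset _ _)), ?_, ?_⟩
  · rw [coe_insert]
    exact hM.insert fun C hC _ => (mem_filter.mp (hM𝒯 hC)).2.symm
  · have hmeet : {C ∈ 𝒯 | ¬Disjoint C B} ⊆ B.biUnion fun x => {C ∈ 𝒯 | x ∈ C} := by
      intro C hC
      obtain ⟨hC𝒯, hCB⟩ := mem_filter.mp hC
      obtain ⟨x, hxC, hxB⟩ := not_disjoint_iff.mp hCB
      exact mem_biUnion.mpr ⟨x, hxB, mem_filter.mpr ⟨hC𝒯, hxC⟩⟩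
    have hmeet_card : #{C ∈ 𝒯 | ¬Disjoint C B} ≤ k * D := calc
      _ ≤ ∑ x ∈ B, #{C ∈ 𝒯 | x ∈ C} := (card_le_card hmeet).trans card_biUnion_le
      _ ≤ #B * D := by simpa using sum_le_sum fun x _ => hD x
      _ ≤ k * D := Nat.mul_le_mul_right D (hk B hB)
    have := card_filter_add_card_filter_not (s := 𝒯) (p := fun C => Disjoint C B)
    rw [card_insert_of_notMem hBM, mul_add_one]
    omega

lemma exists_pairwiseDisjoint_groups (t : ℕ) (𝒯 : Finset (Finset α)) {k D : ℕ}
    (h₀ : ∅ ∉ 𝒯) (hk : ∀ B ∈ 𝒯, #B ≤ k) (hD : ∀ x, #{B ∈ 𝒯 | x ∈ B} ≤ D) :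
    ∃ 𝒢 : Finset (Finset (Finset α)),
      (∀ G ∈ 𝒢, G ⊆ 𝒯 ∧ #G = t + 1 ∧ (G : Set (Finset α)).PairwiseDisjoint id) ∧
      (𝒢 : Set (Finset (Finset α))).PairwiseDisjoint id ∧ #𝒯 ≤ (t + 1) * #𝒢 + k * D * t := by
  induction 𝒯 using Finset.strongInduction with
  | H 𝒯 ih =>
  obtain ⟨M, hM𝒯, hM, hcard⟩ := exists_pairwiseDisjoint_subset_card_le_mul 𝒯 h₀ hk hD
  rcases le_or_gt #M t with hMt | hMt
  · exact ⟨∅, by simp, by simp, by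
      have := Nat.mul_le_mul_left (k * D) hMt
      omega⟩
  obtain ⟨G, hGM, hG⟩ := exists_subset_card_eq (s := M) (n := t + 1) hMt
  have hG𝒯 : G ⊆ 𝒯 := hGM.trans hM𝒯
  have hGne : G.Nonempty := card_pos.mp (by omega)
  obtain ⟨𝒢, h𝒢, h𝒢disj, h𝒢card⟩ := ih (𝒯 \ G) (sdiff_ssubset hG𝒯 hGne)
    (fun h => h₀ (mem_sdiff.mp h).1) (fun B hB => hk B (mem_sdiff.mp hB).1)
    (fun x => (card_le_card (filter_subset_filter _ sdiff_subset)).trans (hD x))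
  have hG𝒢 : G ∉ 𝒢 := fun h => by
    obtain ⟨B, hB⟩ := hGne
    exact (mem_sdiff.mp ((h𝒢 G h).1 hB)).2 hB
  refine ⟨insert G 𝒢, fun G' hG' => ?_, ?_, ?_⟩
  · rcases mem_insert.mp hG' with rfl | hG'
    · exact ⟨hG𝒯, hG, hM.subset (coe_subset.mpr hGM)⟩
    · obtain ⟨hG'𝒯, hG't, hG'disj⟩ := h𝒢 G' hG'
      exact ⟨hG'𝒯.trans sdiff_subset, hG't, hG'disj⟩
  · rw [coe_insert]
    exact h𝒢disj.insert fun G' hG' _ => disjoint_of_subset_right (h𝒢 G' hG').1 disjoint_sdiff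
  · have := card_sdiff_add_card_eq_card hG𝒯
    rw [card_insert_of_notMem hG𝒢, mul_add_one]
    omega

end Packing

section ZeroSumTriples

variable (G : Type*) [AddCommGroup G] [Fintype G] [DecidableEq G]

def zeroSumTriples : Finset (Finset G) :=
  {B ∈ univ.powersetCard 3 | ∑ x ∈ B, x = 0}

variable {G} {B B' : Finset G}

lemma card_of_mem_zeroSumTriples (hB : B ∈ zeroSumTriples G) : #B = 3 :=
  (mem_powersetCard.mp (mem_filter.mp hB).1).2

lemma eq_of_mem_zeroSumTriples (hB : B ∈ zeroSumTriples G) {x y : G} (hx : x ∈ B) (hy : y ∈ B)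
    (hxy : x ≠ y) : B = {x, y, -(x + y)} := by
  have hy' : y ∈ B.erase x := mem_erase.mpr ⟨hxy.symm, hy⟩
  obtain ⟨z, hz⟩ := card_eq_one.mp (show #((B.erase x).erase y) = 1 by
    rw [card_erase_of_mem hy', card_erase_of_mem hx, card_of_mem_zeroSumTriples hB])
  have hzB : z ∈ (B.erase x).erase y := hz ▸ mem_singleton_self z
  have hBeq : B = {x, y, z} := by rw [← hz, insert_erase hy', insert_erase hx]
  have hsum := (mem_filter.mp hB).2
  rw [hBeq, sum_insert (by grind), sum_insert (by grind), sum_singleton] at hsum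
  rw [hBeq, eq_neg_of_add_eq_zero_right (a := x + y) (b := z) (by rw [← hsum]; abel)]

lemma card_inter_le_one_of_mem_zeroSumTriples (hB : B ∈ zeroSumTriples G)
    (hB' : B' ∈ zeroSumTriples G) (hne : B ≠ B') : #(B ∩ B') ≤ 1 := by
  by_contra! h
  obtain ⟨x, hx, y, hy, hxy⟩ := one_lt_card.mp h
  rw [mem_inter] at hx hy
  exact hne ((eq_of_mem_zeroSumTriples hB hx.1 hy.1 hxy).trans
    (eq_of_mem_zeroSumTriples hB' hx.2 hy.2 hxy).symm)

lemma card_filter_mem_zeroSumTriples_le (x : G) :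
    #{B ∈ zeroSumTriples G | x ∈ B} ≤ Fintype.card G := by
  refine (card_le_card fun B hB => ?_).trans (card_image_le (s := univ)
    (f := fun y => ({x, y, -(x + y)} : Finset G)))
  obtain ⟨hB, hxB⟩ := mem_filter.mp hB
  obtain ⟨y, hy⟩ := card_pos.mp (by
    rw [card_erase_of_mem hxB, card_of_mem_zeroSumTriples hB]; omega : 0 < #(B.erase x))
  obtain ⟨hyx, hyB⟩ := mem_erase.mp hy
  exact mem_image.mpr ⟨y, mem_univ y, (eq_of_mem_zeroSumTriples hB hxB hyB hyx.symm).symm⟩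

lemma four_le_card_symmDiff_of_mem_zeroSumTriples (hB : B ∈ zeroSumTriples G)
    (hB' : B' ∈ zeroSumTriples G) (hne : B ≠ B') : 4 ≤ #(symmDiff B B') := by
  have := card_inter_le_one_of_mem_zeroSumTriples hB hB' hne
  have := card_symmDiff_add_two_mul_card_inter B B'
  rw [card_of_mem_zeroSumTriples hB, card_of_mem_zeroSumTriples hB'] at this
  omega

lemma insert_insert_neg_add_mem_zeroSumTriples {x y : G} (hxy : x ≠ y) (hx : -(x + y) ≠ x)
    (hy : -(x + y) ≠ y) : ({x, y, -(x + y)} : Finset G) ∈ zeroSumTriples G := by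
  have h₁ : x ∉ ({y, -(x + y)} : Finset G) := by grind
  have h₂ : y ∉ ({-(x + y)} : Finset G) := by grind
  refine mem_filter.mpr ⟨mem_powersetCard.mpr ⟨subset_univ _, ?_⟩, ?_⟩
  · rw [card_insert_of_notMem h₁, card_insert_of_notMem h₂, card_singleton]
  · rw [sum_insert h₁, sum_insert h₂, sum_singleton]
    abel

lemma card_filter_eq_or_neg_add_eq_le :
    #{p : G × G | p.1 = p.2 ∨ -(p.1 + p.2) = p.1 ∨ -(p.1 + p.2) = p.2} ≤ 3 * Fintype.card G := by
  have hsub : ({p | p.1 = p.2 ∨ -(p.1 + p.2) = p.1 ∨ -(p.1 + p.2) = p.2} : Finset (G × G)) ⊆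
      univ.biUnion fun a : G => {(a, a), (a, -(a + a)), (-(a + a), a)} := by
    intro p hp
    refine mem_biUnion.mpr ?_
    rcases (mem_filter.mp hp).2 with h | h | h
    · exact ⟨p.1, mem_univ _, mem_insert.mpr (.inl (Prod.ext rfl h.symm))⟩
    · have h' := neg_eq_iff_add_eq_zero.mp h
      refine ⟨p.1, mem_univ _, mem_insert_of_mem (mem_insert.mpr (.inl (Prod.ext rfl ?_)))⟩
      exact eq_neg_of_add_eq_zero_left (by rw [← h']; abel)
    · have h' := neg_eq_iff_add_eq_zero.mp h
      refine ⟨p.2, mem_univ _, mem_insert_of_mem (mem_insert_of_mem (mem_singleton.mpr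
        (Prod.ext ?_ rfl)))⟩
      exact eq_neg_of_add_eq_zero_left (by rw [← h']; abel)
  calc _ ≤ _ := card_le_card hsub
    _ ≤ ∑ _a : G, 3 := card_biUnion_le.trans (sum_le_sum fun _ _ => card_le_three)
    _ = 3 * Fintype.card G := by rw [sum_const, card_univ, smul_eq_mul, mul_comm]

/-- Each zero-sum triple is `{x, y, -(x + y)}` for exactly six ordered pairs `(x, y)`. -/
lemma card_sq_le_six_mul_card_zeroSumTriples :
    Fintype.card G ^ 2 ≤ 6 * #(zeroSumTriples G) + 3 * Fintype.card G := by
  have hbad := card_filter_eq_or_neg_add_eq_le (G := G)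
  set bad : Finset (G × G) := {p | p.1 = p.2 ∨ -(p.1 + p.2) = p.1 ∨ -(p.1 + p.2) = p.2}
  set f : G × G → Finset G := fun p => {p.1, p.2, -(p.1 + p.2)}
  have hf : ∀ p ∈ univ \ bad, f p ∈ zeroSumTriples G := by
    intro p hp
    simp only [bad, mem_sdiff, mem_filter, mem_univ, true_and, not_or] at hp
    exact insert_insert_neg_add_mem_zeroSumTriples hp.1 hp.2.1 hp.2.2
  have hfib : ∀ B ∈ (univ \ bad).image f, #{p ∈ univ \ bad | f p = B} ≤ 6 := by
    intro B hB
    obtain ⟨p, hp, rfl⟩ := mem_image.mp hB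
    have hsub : {q ∈ univ \ bad | f q = f p} ⊆ (f p).offDiag := by
      intro q hq
      obtain ⟨hqs, hqp⟩ := mem_filter.mp hq
      simp only [bad, mem_sdiff, mem_filter, mem_univ, true_and, not_or] at hqs
      rw [mem_offDiag, ← hqp]
      exact ⟨by simp [f], by simp [f], hqs.1⟩
    have := card_le_card hsub
    rwa [offDiag_card, card_of_mem_zeroSumTriples (hf p hp)] at this
  have hgood := (card_le_mul_card_image _ 6 hfib).trans
    (Nat.mul_le_mul_left 6 (card_le_card (image_subset_iff.mpr hf)))
  have hsplit := card_le_card_sdiff_add_card (s := univ) (t := bad)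
  rw [card_univ, Fintype.card_prod] at hsplit
  rw [sq]
  omega

end ZeroSumTriples

section Codes

variable {α : Type*} [DecidableEq α]

lemma isLPECC_of_pairwiseDisjoint [Fintype α] {t w e : ℕ} {𝒢 : Finset (Finset (Finset α))}
    (hA : ∀ G ∈ 𝒢, ∀ T : Finset α, #T = t → ∃ B ∈ G, Disjoint B T)
    (hB : ∀ G ∈ 𝒢, ∀ B ∈ G, #B ≤ w) (h𝒢 : (𝒢 : Set (Finset (Finset α))).PairwiseDisjoint id)
    (hC : ∀ G ∈ 𝒢, ∀ G' ∈ 𝒢, G ≠ G' → ∀ B ∈ G, ∀ B' ∈ G', 2 * e + 1 ≤ #(symmDiff B B')) :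
    IsLPECC (Fintype.card α) t w e univ fun i => (𝒢.equivFin.symm i : Finset (Finset α)) := by
  have hmem (i) : (𝒢.equivFin.symm i : Finset (Finset α)) ∈ 𝒢 := (𝒢.equivFin.symm i).2
  have hne {i j} (hij : i ≠ j) :
      (𝒢.equivFin.symm i : Finset (Finset α)) ≠ 𝒢.equivFin.symm j :=
    fun h => hij (𝒢.equivFin.symm.injective (Subtype.ext h))
  exact ⟨card_univ, fun _ _ _ => subset_univ _, fun i j hij => h𝒢 (hmem i) (hmem j) (hne hij),
    fun T _ hT i => hA _ (hmem i) T hT, fun i => hB _ (hmem i),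
    fun i j hij => hC _ (hmem i) _ (hmem j) (hne hij)⟩

lemma isLPECC_elim0 (n t w e : ℕ) :
    IsLPECC n t w e (univ : Finset (Fin n)) (Fin.elim0 : Fin 0 → Finset (Finset (Fin n))) :=
  ⟨by simp, fun i => i.elim0, fun i => i.elim0, fun _ _ _ i => i.elim0, fun i => i.elim0,
    fun i => i.elim0⟩

lemma bddAbove_sizes_isLPECC {n t : ℕ} (ht : t ≤ n) :
    BddAbove {b | ∃ P : Fin b → Finset (Finset (Fin n)), IsLPECC n t 3 1 univ P} :=
  ⟨n ^ 2 + 6 * n + 6 * (t + 1), fun b ⟨_, hP⟩ =>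
    (Nat.le_mul_of_pos_left b (by positivity)).trans (hP.six_mul_succ_mul_le ht)⟩

lemma six_mul_succ_mul_Cmax_le {n t : ℕ} (ht : t ≤ n) :
    6 * (t + 1) * Cmax n t 3 1 ≤ n ^ 2 + 6 * n + 6 * (t + 1) := by
  obtain ⟨P, hP⟩ :=
    Nat.sSup_mem (by exact ⟨0, _, isLPECC_elim0 n t 3 1⟩) (bddAbove_sizes_isLPECC ht)
  exact hP.six_mul_succ_mul_le ht

lemma sq_le_six_mul_succ_mul_Cmax_add {n t : ℕ} [NeZero n] (ht : t ≤ n) :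
    n ^ 2 ≤ 6 * (t + 1) * Cmax n t 3 1 + (18 * t + 3) * n := by
  have hcard (B) (hB : B ∈ zeroSumTriples (Fin n)) := card_of_mem_zeroSumTriples hB
  obtain ⟨𝒢, h𝒢, h𝒢disj, hpacked⟩ := exists_pairwiseDisjoint_groups t (zeroSumTriples (Fin n))
    (k := 3) (fun h => by simpa using hcard ∅ h) (fun B hB => (hcard B hB).le)
    (card_filter_mem_zeroSumTriples_le (G := Fin n))
  have hcode := isLPECC_of_pairwiseDisjoint (t := t) (w := 3) (e := 1) (𝒢 := 𝒢)
    (fun G hG T hT => exists_disjoint_of_pairwiseDisjoint (h𝒢 G hG).2.2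
      (by rw [hT, (h𝒢 G hG).2.1]; omega))
    (fun G hG B hB => (hcard B ((h𝒢 G hG).1 hB)).le) h𝒢disj
    fun G hG G' hG' hGG' B hB B' hB' => le_trans (by norm_num)
      (four_le_card_symmDiff_of_mem_zeroSumTriples ((h𝒢 G hG).1 hB) ((h𝒢 G' hG').1 hB')
        fun h => disjoint_left.mp (h𝒢disj hG hG' hGG') hB (h ▸ hB'))
  rw [Fintype.card_fin] at hcode
  have hle : #𝒢 ≤ Cmax n t 3 1 := le_csSup (bddAbove_sizes_isLPECC ht) ⟨_, hcode⟩
  have hcount := card_sq_le_six_mul_card_zeroSumTriples (G := Fin n)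
  rw [Fintype.card_fin] at hcount hpacked
  nlinarith [Nat.mul_le_mul_left (6 * (t + 1)) hle]

end Codes

open Filter Topology in
lemma tendsto_div_sq_of_abs_mul_sub_sq_le {a : ℕ → ℝ} {c K : ℝ} (hc : 0 < c)
    (h : ∀ᶠ n : ℕ in atTop, |c * a n - n ^ 2| ≤ K * n) :
    Tendsto (fun n => a n / n ^ 2) atTop (𝓝 (1 / c)) := by
  rw [← tendsto_sub_nhds_zero_iff]
  refine squeeze_zero_norm' ?_ (tendsto_const_div_atTop_nhds_zero_nat (K / c))
  filter_upwards [h, eventually_gt_atTop 0] with n hn hn0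
  have hn' : (0 : ℝ) < n := by exact_mod_cast hn0
  rw [Real.norm_eq_abs, show a n / n ^ 2 - 1 / c = (c * a n - n ^ 2) / (c * n ^ 2) by
    field_simp, abs_div, abs_of_pos (mul_pos hc (pow_pos hn' 2)),
    div_le_div_iff₀ (mul_pos hc (pow_pos hn' 2)) hn']
  calc |c * a n - n ^ 2| * n ≤ K * n * n := by gcongr
    _ = K / c * (c * n ^ 2) := by field_simp

theorem lpecc_w3_e1_asymptotics_general (t : ℕ) :
    Filter.Tendsto (fun n : ℕ => (Cmax n t 3 1 : ℝ) / (n : ℝ) ^ 2)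
      Filter.atTop (nhds (1 / (6 * (t + 1)))) := by
  refine tendsto_div_sq_of_abs_mul_sub_sq_le (K := 18 * t + 12) (by positivity) ?_
  filter_upwards [Filter.eventually_ge_atTop (t + 1)] with n hn
  have : NeZero n := ⟨by omega⟩
  have hupper : 6 * (t + 1) * Cmax n t 3 1 ≤ n ^ 2 + (18 * t + 12) * n := by
    nlinarith [six_mul_succ_mul_Cmax_le (n := n) (by omega : t ≤ n)]
  have hlower : n ^ 2 ≤ 6 * (t + 1) * Cmax n t 3 1 + (18 * t + 12) * n := by
    nlinarith [sq_le_six_mul_succ_mul_Cmax_add (n := n) (by omega : t ≤ n)]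
  have hupper' : (6 * (t + 1) * Cmax n t 3 1 : ℝ) ≤ n ^ 2 + (18 * t + 12) * n := by
    exact_mod_cast hupper
  have hlower' : (n ^ 2 : ℝ) ≤ 6 * (t + 1) * Cmax n t 3 1 + (18 * t + 12) * n := by
    exact_mod_cast hlower
  rw [abs_sub_le_iff]
  constructor <;> linarith

theorem lpecc_w3_e1_asymptotics (t : ℕ) (ht : 1 ≤ t) :
    Filter.Tendsto (fun n : ℕ => (Cmax n t 3 1 : ℝ) / (n : ℝ) ^ 2)
      Filter.atTop (nhds (1 / (6 * (t + 1)))) :=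
  lpecc_w3_e1_asymptotics_general t
end
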